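/- arXiv:2501.17263 — 7 statements merged into one kernel-verified Lean document; each statement's English description precedes it below -/
import Mathlib

section
/- Let Γ be an ample group over the Cantor space X acting minimally, and let A, B be clopen subsets of X. If μ(A) < μ(B) for every Γ-invariant Borel probability measure μ on X, then there exists γ ∈ Γ such that γ(A) ⊆ B. -/
open MeasureTheory Set

/-- The group structure on self-homeomorphisms of a topological space,
with `(f * g) x = f (g x)`. -/
instance Homeomorph.instGroupSelf {Y : Type*} [TopologicalSpace Y] : Group (Y ≃ₜ Y) where
  mul f g := g.trans f
  one := Homeomorph.refl Y
  inv := Homeomorph.symm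
  mul_assoc := fun _ _ _ => rfl
  one_mul := fun _ => by ext x; rfl
  mul_one := fun _ => by ext x; rfl
  inv_mul_cancel := fun a => by ext x; exact a.symm_apply_apply x

/-- `Y` is a Cantor space: nonempty, compact, metrizable, totally disconnected and perfect. -/
def IsCantorSpace (Y : Type*) [TopologicalSpace Y] : Prop :=
  Nonempty Y ∧ CompactSpace Y ∧ TopologicalSpace.MetrizableSpace Y ∧ TotallyDisconnectedSpace Y ∧
    Perfect (Set.univ : Set Y)

/-- `g` coincides piecewise, on a finite clopen partition of the space, with elements of `Γ`. -/
def PiecewiseIn {Y : Type*} [TopologicalSpace Y] (Γ : Subgroup (Y ≃ₜ Y)) (g : Y ≃ₜ Y) : Prop :=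
  ∃ (n : ℕ) (U : Fin n → Set Y) (γ : Fin n → (Y ≃ₜ Y)),
    (∀ i, IsClopen (U i)) ∧ (∀ i, γ i ∈ Γ) ∧
    Pairwise (Function.onFun Disjoint U) ∧ (⋃ i, U i) = Set.univ ∧
    (∀ i, ∀ x ∈ U i, g x = γ i x)

/-- A subgroup of `Homeo(Y)` is full if it contains every homeomorphism which coincides
piecewise, on a finite clopen partition, with elements of the subgroup. -/
def IsFullGroup {Y : Type*} [TopologicalSpace Y] (Γ : Subgroup (Y ≃ₜ Y)) : Prop :=
  ∀ g : Y ≃ₜ Y, PiecewiseIn Γ g → g ∈ Γ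

/-- Every finitely generated subgroup is finite. -/
def IsLocallyFiniteGroup {Y : Type*} [TopologicalSpace Y] (Γ : Subgroup (Y ≃ₜ Y)) : Prop :=
  ∀ S : Finset (Y ≃ₜ Y), (S : Set (Y ≃ₜ Y)) ⊆ (Γ : Set (Y ≃ₜ Y)) →
    ((Subgroup.closure (S : Set (Y ≃ₜ Y)) : Subgroup (Y ≃ₜ Y)) : Set (Y ≃ₜ Y)).Finite

/-- An ample group over `Y`: countable, locally finite, full, with clopen fixed-point sets. -/
def IsAmpleGroup {Y : Type*} [TopologicalSpace Y] (Γ : Subgroup (Y ≃ₜ Y)) : Prop :=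
  (Γ : Set (Y ≃ₜ Y)).Countable ∧ IsLocallyFiniteGroup Γ ∧ IsFullGroup Γ ∧
    ∀ γ ∈ Γ, IsClopen {x : Y | γ x = x}

/-- The action of `Γ` is minimal: every orbit is dense. -/
def IsMinimalGroup {Y : Type*} [TopologicalSpace Y] (Γ : Subgroup (Y ≃ₜ Y)) : Prop :=
  ∀ x : Y, Dense {y : Y | ∃ γ ∈ Γ, γ x = y}

/-- `M(Γ)`: the set of `Γ`-invariant Borel probability measures. -/
def InvProbMeasures {Y : Type*} [TopologicalSpace Y] [MeasurableSpace Y]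
    (Γ : Subgroup (Y ≃ₜ Y)) : Set (Measure Y) :=
  {μ | IsProbabilityMeasure μ ∧ ∀ γ ∈ Γ, Measure.map (γ : Y → Y) μ = μ}

/-- `A ∼_Γ B`: some element of `Γ` maps `A` onto `B`. -/
def ClopenEquiv {Y : Type*} [TopologicalSpace Y] (Γ : Subgroup (Y ≃ₜ Y)) (A B : Set Y) : Prop :=
  ∃ γ ∈ Γ, γ '' A = B

/-- `K` is `Γ`-thin: null for every `Γ`-invariant Borel probability measure. -/
def IsThin {Y : Type*} [TopologicalSpace Y] [MeasurableSpace Y]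
    (Γ : Subgroup (Y ≃ₜ Y)) (K : Set Y) : Prop :=
  ∀ μ ∈ InvProbMeasures Γ, μ K = 0

/-- `A` is a subset of `K` which is clopen in the subspace topology of `K`. -/
def IsClopenIn {Y : Type*} [TopologicalSpace Y] (K A : Set Y) : Prop :=
  A ⊆ K ∧ IsClopen ((Subtype.val ⁻¹' A) : Set K)

/-- `K` is `Γ`-étale: `K` is closed and for every `γ ∈ Γ` and every `A ⊆ K` clopen in `K`,
`γ(A) ∩ K` is clopen in `K`. -/
def IsEtale {Y : Type*} [TopologicalSpace Y] (Γ : Subgroup (Y ≃ₜ Y)) (K : Set Y) : Prop :=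
  IsClosed K ∧ ∀ γ ∈ Γ, ∀ A : Set Y, IsClopenIn K A → IsClopenIn K ((γ : Y ≃ₜ Y) '' A ∩ K)

/-- `K` is `Γ`-malleable: closed, `Γ`-thin and `Γ`-étale. -/
def IsMalleable {Y : Type*} [TopologicalSpace Y] [MeasurableSpace Y]
    (Γ : Subgroup (Y ≃ₜ Y)) (K : Set Y) : Prop :=
  IsClosed K ∧ IsThin Γ K ∧ IsEtale Γ K

open scoped Classical in
/-- The induced map `γ_K : K → K`:  `γ_K x = γ x` if `γ x ∈ K`, and `γ_K x = x` otherwise. -/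
noncomputable def inducedMap {Y : Type*} [TopologicalSpace Y] (γ : Y ≃ₜ Y) (K : Set Y) :
    K → K :=
  fun x => if h : (γ (x : Y)) ∈ K then ⟨γ (x : Y), h⟩ else x

/-- `Γ_K`: the set of homeomorphisms of `K` which are restrictions of elements of `Γ`
mapping `K` onto itself. -/
def restrGroup {Y : Type*} [TopologicalSpace Y] (Γ : Subgroup (Y ≃ₜ Y)) (K : Set Y) :
    Set ((K : Set Y) ≃ₜ (K : Set Y)) :=
  {g | ∃ γ ∈ Γ, (γ : Y ≃ₜ Y) '' K = K ∧ ∀ x : K, (g x : Y) = γ (x : Y)}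

/-- The orbit equivalence relation `R_Γ` of a subgroup of `Homeo(Y)`. -/
def orbitRelOf {Y : Type*} [TopologicalSpace Y] (Γ : Subgroup (Y ≃ₜ Y)) (x y : Y) : Prop :=
  ∃ γ ∈ Γ, γ x = y

/-- `R_Γ(K, Δ)`: the smallest equivalence relation containing `R_Γ` together with all pairs
`(x, δ x)` for `x ∈ K` and `δ ∈ Δ`, where `Δ` is a subgroup of `Homeo(K)`. -/
def extOrbitRel {Y : Type*} [TopologicalSpace Y] (Γ : Subgroup (Y ≃ₜ Y)) (K : Set Y)
    (Δ : Set ((K : Set Y) ≃ₜ (K : Set Y))) (x y : Y) : Prop :=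
  Relation.EqvGen (fun a b => orbitRelOf Γ a b ∨ ∃ ha : a ∈ K, ∃ δ ∈ Δ, ((δ ⟨a, ha⟩ : K) : Y) = b) x y

/-- Two relations on `Y` are orbit equivalent if some homeomorphism of `Y` carries one
to the other. -/
def OrbitEquivalent {Y : Type*} [TopologicalSpace Y] (R S : Y → Y → Prop) : Prop :=
  ∃ g : Y ≃ₜ Y, ∀ x y : Y, R x y ↔ S (g x) (g y)

/-- A unit system `(𝒜, Δ)`: a Boolean subalgebra `𝒜` of the clopen subsets of `Y`
together with a subgroup `Δ ≤ Homeo(Y)` satisfying the compatibility conditions. -/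
structure IsUnitSystem {Y : Type*} [TopologicalSpace Y] (𝒜 : Set (Set Y))
    (Δ : Subgroup (Y ≃ₜ Y)) : Prop where
  clopen : ∀ A ∈ 𝒜, IsClopen A
  empty_mem : (∅ : Set Y) ∈ 𝒜
  compl_mem : ∀ A ∈ 𝒜, Aᶜ ∈ 𝒜
  inter_mem : ∀ A ∈ 𝒜, ∀ B ∈ 𝒜, A ∩ B ∈ 𝒜
  maps : ∀ δ ∈ Δ, ∀ A ∈ 𝒜, (δ : Y ≃ₜ Y) '' A ∈ 𝒜
  eval_injective : ∀ δ ∈ Δ, (∀ A ∈ 𝒜, (δ : Y ≃ₜ Y) '' A = A) → δ = 1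
  fixed_mem : ∀ δ ∈ Δ, {x : Y | δ x = x} ∈ 𝒜
  full : ∀ g : Y ≃ₜ Y, (∃ (n : ℕ) (U : Fin n → Set Y) (γ : Fin n → (Y ≃ₜ Y)),
      (∀ i, U i ∈ 𝒜) ∧ (∀ i, γ i ∈ Δ) ∧ Pairwise (Function.onFun Disjoint U) ∧
      (⋃ i, U i) = Set.univ ∧ (∀ i, ∀ x ∈ U i, g x = γ i x)) → g ∈ Δ

/-- An atom of a (finite) Boolean algebra of sets. -/
def IsAtomOf {Y : Type*} (𝒜 : Set (Set Y)) (A : Set Y) : Prop :=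
  A ∈ 𝒜 ∧ A ≠ ∅ ∧ ∀ B ∈ 𝒜, B ⊆ A → B = ∅ ∨ B = A

/-- A finite unit system `(𝒜, Δ)` is `K`-compatible if whenever an element of `Δ` maps an
atom `A` to an atom `B` and both meet `K`, it maps `K ∩ A` onto `K ∩ B`. -/
def IsKCompatible {Y : Type*} [TopologicalSpace Y] (K : Set Y) (𝒜 : Set (Set Y))
    (Δ : Subgroup (Y ≃ₜ Y)) : Prop :=
  ∀ A B : Set Y, IsAtomOf 𝒜 A → IsAtomOf 𝒜 B → ∀ δ ∈ Δ, (δ : Y ≃ₜ Y) '' A = B →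
    (K ∩ A).Nonempty → (K ∩ B).Nonempty → (δ : Y ≃ₜ Y) '' (K ∩ A) = K ∩ B

/-!
Write the countable locally finite group `Γ` as an increasing union of finite subgroups `Gₙ`.
If for every `n` some point `xₙ` had at least as many `Gₙ`-translates in `A` as in `B`, a cluster
point of the normalised counting functions `C ↦ #{γ ∈ Gₙ | γ xₙ ∈ C} / #Gₙ` would be a
`Γ`-invariant finitely additive probability on the clopen sets with `m B ≤ m A`. On a compact
zero-dimensional space such a function is the restriction of a Borel probability measure, which is
then `Γ`-invariant, contradicting `μ A < μ B`. Hence some finite `H ≤ Γ` moves every point into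
`B` more often than into `A`.

`H` permutes the finitely many atoms of the Boolean algebra generated by the `H`-translates of `A`
and `B`, and counting `H`-translates orbit by orbit shows that every `H`-orbit of atoms has fewer
atoms inside `A` than inside `B`. An orbit-preserving permutation of the atoms sending the atoms of
`A` to atoms of `B` is realised on each atom by an element of `H`; the glued homeomorphism lies in
`Γ` because `Γ` is full.
-/

open Filter Topology TopologicalSpace
open scoped ENNReal

section ClopenContent

variable {X : Type*} [TopologicalSpace X]

def IsClopenContent (m : Set X → ℝ≥0∞) : Prop :=
  m univ = 1 ∧ ∀ s t, IsClopen s → IsClopen t → Disjoint s t → m (s ∪ t) = m s + m t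

theorem isClosed_setOf_isClopenContent : IsClosed {m : Set X → ℝ≥0∞ | IsClopenContent m} := by
  simp only [IsClopenContent, ofPred_and, ofPred_forall]
  exact (isClosed_eq (continuous_apply _) continuous_const).inter <|
    isClosed_iInter fun s => isClosed_iInter fun t => isClosed_iInter fun _ =>
      isClosed_iInter fun _ => isClosed_iInter fun _ =>
        isClosed_eq (continuous_apply _) ((continuous_apply s).add (continuous_apply t))

noncomputable def clopenEnvelope (m : Set X → ℝ≥0∞) (K : Set X) : ℝ≥0∞ :=
  ⨅ (C : Set X) (_ : IsClopen C) (_ : K ⊆ C), m C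

theorem clopenEnvelope_le (m : Set X → ℝ≥0∞) {K C : Set X} (hC : IsClopen C) (hKC : K ⊆ C) :
    clopenEnvelope m K ≤ m C :=
  iInf₂_le_of_le C hC (iInf_le _ hKC)

theorem clopenEnvelope_mono (m : Set X → ℝ≥0∞) {K L : Set X} (hKL : K ⊆ L) :
    clopenEnvelope m K ≤ clopenEnvelope m L :=
  le_iInf₂ fun _ hC => le_iInf fun hLC => clopenEnvelope_le m hC (hKL.trans hLC)

namespace IsClopenContent

variable {m : Set X → ℝ≥0∞} (hm : IsClopenContent m)
include hm

theorem mono {s t : Set X} (hs : IsClopen s) (ht : IsClopen t) (hst : s ⊆ t) : m s ≤ m t := by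
  rw [← union_sdiff_cancel hst, hm.2 s (t \ s) hs (ht.diff hs) disjoint_sdiff_right]
  exact le_self_add

theorem union_le {s t : Set X} (hs : IsClopen s) (ht : IsClopen t) :
    m (s ∪ t) ≤ m s + m t := by
  rw [← union_sdiff_self, hm.2 s (t \ s) hs (ht.diff hs) disjoint_sdiff_right]
  exact add_le_add_right (hm.mono (ht.diff hs) ht sdiff_subset) _

theorem le_one {s : Set X} (hs : IsClopen s) : m s ≤ 1 :=
  hm.1 ▸ hm.mono hs isClopen_univ (subset_univ s)

theorem clopenEnvelope_eq {C : Set X} (hC : IsClopen C) : clopenEnvelope m C = m C :=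
  (clopenEnvelope_le m hC subset_rfl).antisymm <|
    le_iInf₂ fun _ hD => le_iInf fun hCD => hm.mono hC hD hCD

theorem clopenEnvelope_ne_top (K : Set X) : clopenEnvelope m K ≠ ⊤ :=
  ((clopenEnvelope_le m isClopen_univ (subset_univ K)).trans (hm.le_one isClopen_univ)).trans_lt
    ENNReal.one_lt_top |>.ne

theorem clopenEnvelope_union_le (K L : Set X) :
    clopenEnvelope m (K ∪ L) ≤ clopenEnvelope m K + clopenEnvelope m L := by
  simp only [clopenEnvelope, ENNReal.iInf_add, ENNReal.add_iInf]
  refine le_iInf₂ fun C hC => le_iInf fun hLC => le_iInf₂ fun D hD => le_iInf fun hKD => ?_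
  exact (clopenEnvelope_le m (hD.union hC) (union_subset_union hKD hLC)).trans
    (hm.union_le hD hC)

variable [CompactSpace X] [T2Space X] [TotallyDisconnectedSpace X]

theorem clopenEnvelope_union_of_disjoint {K L : Set X} (hK : IsClosed K) (hL : IsClosed L)
    (hKL : Disjoint K L) :
    clopenEnvelope m (K ∪ L) = clopenEnvelope m K + clopenEnvelope m L := by
  refine (hm.clopenEnvelope_union_le K L).antisymm (le_iInf₂ fun C hC => le_iInf fun hKLC => ?_)
  obtain ⟨D, hD, hKD, hDL⟩ :=
    exists_clopen_of_closed_subset_open hK hL.isOpen_compl (subset_compl_iff_disjoint_right.2 hKL)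
  have hKC : K ⊆ C ∩ D := subset_inter (subset_union_left.trans hKLC) hKD
  have hLC : L ⊆ C \ D :=
    subset_sdiff.2 ⟨subset_union_right.trans hKLC, (subset_compl_iff_disjoint_right.1 hDL).symm⟩
  calc clopenEnvelope m K + clopenEnvelope m L ≤ m (C ∩ D) + m (C \ D) :=
        add_le_add (clopenEnvelope_le m (hC.inter hD) hKC) (clopenEnvelope_le m (hC.diff hD) hLC)
    _ = m C := by
      rw [← hm.2 _ _ (hC.inter hD) (hC.diff hD) (disjoint_sdiff_inter.symm), inter_union_sdiff]

noncomputable def toContent : Content X where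
  toFun K := (clopenEnvelope m K).toNNReal
  mono' _ _ hKL := ENNReal.toNNReal_mono (hm.clopenEnvelope_ne_top _) (clopenEnvelope_mono m hKL)
  sup_disjoint' K L hKL hK hL := by
    rw [Compacts.coe_sup, hm.clopenEnvelope_union_of_disjoint hK hL hKL,
      ENNReal.toNNReal_add (hm.clopenEnvelope_ne_top _) (hm.clopenEnvelope_ne_top _)]
  sup_le' K L := by
    rw [Compacts.coe_sup, ← ENNReal.toNNReal_add (hm.clopenEnvelope_ne_top _)
      (hm.clopenEnvelope_ne_top _)]
    exact ENNReal.toNNReal_mono (by simp [hm.clopenEnvelope_ne_top])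
      (hm.clopenEnvelope_union_le K L)

theorem toContent_measure_apply [MeasurableSpace X] [BorelSpace X] {C : Set X}
    (hC : IsClopen C) : hm.toContent.measure C = m C := by
  rw [Content.measure_apply _ hC.isOpen.measurableSet, Content.outerMeasure_of_isOpen _ C hC.isOpen,
    Content.innerContent_of_isCompact _ hC.isClosed.isCompact hC.isOpen]
  exact (ENNReal.coe_toNNReal (hm.clopenEnvelope_ne_top C)).trans (hm.clopenEnvelope_eq hC)

theorem exists_isProbabilityMeasure [MeasurableSpace X] [BorelSpace X] :
    ∃ μ : Measure X, IsProbabilityMeasure μ ∧ ∀ C, IsClopen C → μ C = m C :=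
  ⟨hm.toContent.measure, ⟨(hm.toContent_measure_apply isClopen_univ).trans hm.1⟩,
    fun _ => hm.toContent_measure_apply⟩

end IsClopenContent

theorem MeasureTheory.Measure.ext_of_isClopen [CompactSpace X] [T2Space X]
    [TotallyDisconnectedSpace X] [SecondCountableTopology X] [MeasurableSpace X] [BorelSpace X]
    {μ ν : Measure X} [IsFiniteMeasure μ] (h : ∀ C, IsClopen C → μ C = ν C) : μ = ν :=
  ext_of_generate_finite {C : Set X | IsClopen C}
    ((isTopologicalBasis_isClopen (X := X)).borel_eq_generateFrom ▸ BorelSpace.measurable_eq)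
    (fun _ hs _ ht _ => IsClopen.inter hs ht) (fun C hC => h C hC)
    (h univ isClopen_univ)

end ClopenContent

theorem IsLocallyFiniteGroup.exists_monotone_finite_exhaustion {Y : Type*} [TopologicalSpace Y]
    {Γ : Subgroup (Y ≃ₜ Y)} (hlf : IsLocallyFiniteGroup Γ) (hc : (Γ : Set (Y ≃ₜ Y)).Countable) :
    ∃ G : ℕ → Subgroup (Y ≃ₜ Y), Monotone G ∧ (∀ n, Finite (G n)) ∧ (∀ n, G n ≤ Γ) ∧
      ∀ γ ∈ Γ, ∃ n, γ ∈ G n := by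
  classical
  obtain ⟨e, he⟩ := hc.exists_eq_range ⟨1, Γ.one_mem⟩
  have hsub : ∀ n, (((Finset.range (n + 1)).image e : Finset _) : Set (Y ≃ₜ Y)) ⊆ Γ := by
    intro n
    simp [he]
  refine ⟨fun n => Subgroup.closure ((Finset.range (n + 1)).image e : Finset _), ?_,
    fun n => (hlf _ (hsub n)).to_subtype, fun n => (Subgroup.closure_le Γ).2 (hsub n), ?_⟩
  · refine fun k n hkn => Subgroup.closure_mono ?_
    exact Finset.coe_subset.2 (Finset.image_subset_image (Finset.range_subset_range.2 (by omega)))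
  · intro γ hγ
    obtain ⟨n, rfl⟩ : γ ∈ range e := he ▸ hγ
    exact ⟨n, Subgroup.subset_closure (Finset.mem_image_of_mem e (Finset.self_mem_range_succ n))⟩

instance Homeomorph.applyMulAction {Y : Type*} [TopologicalSpace Y] : MulAction (Y ≃ₜ Y) Y where
  smul f x := f x
  one_smul _ := rfl
  mul_smul _ _ _ := rfl

section OrbitFrequency

variable {X : Type*} [TopologicalSpace X] (H : Subgroup (X ≃ₜ X))

noncomputable def orbitFreq (x : X) (s : Set X) : ℝ≥0∞ :=
  Nat.card {γ : H // γ • x ∈ s} / Nat.card H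

theorem orbitFreq_le_orbitFreq {x : X} {s t : Set X}
    (h : Nat.card {γ : H // γ • x ∈ s} ≤ Nat.card {γ : H // γ • x ∈ t}) :
    orbitFreq H x s ≤ orbitFreq H x t :=
  ENNReal.div_le_div_right (Nat.cast_le.2 h) _

theorem orbitFreq_preimage {δ : X ≃ₜ X} (hδ : δ ∈ H) (x : X) (s : Set X) :
    orbitFreq H x (δ ⁻¹' s) = orbitFreq H x s := by
  rw [orbitFreq, orbitFreq, Nat.card_congr (Equiv.subtypeEquiv (p := fun γ : H => γ • x ∈ δ ⁻¹' s)
    (q := fun γ : H => γ • x ∈ s) (Equiv.mulLeft ⟨δ, hδ⟩) fun _ => Iff.rfl)]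

variable [Finite H]

theorem isClopenContent_orbitFreq (x : X) : IsClopenContent (orbitFreq H x) := by
  classical
  refine ⟨?_, fun s t _ _ hst => ?_⟩
  · rw [orbitFreq, ENNReal.div_eq_one_iff (by simp [Nat.card_pos.ne']) (by simp)]
    exact congrArg _ (Nat.card_congr (Equiv.subtypeUnivEquiv fun _ => mem_univ _))
  · rw [orbitFreq, orbitFreq, orbitFreq, ← ENNReal.add_div, ← Nat.cast_add, ← Nat.card_sum]
    congr 2
    exact Nat.card_congr (subtypeOrEquiv
      (fun γ : H => γ • x ∈ s) (fun γ => γ • x ∈ t) (hst.preimage fun γ : H => γ • x))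

end OrbitFrequency

theorem exists_finite_subgroup_card_lt {X : Type*} [TopologicalSpace X] [CompactSpace X]
    [T2Space X] [TotallyDisconnectedSpace X] [SecondCountableTopology X] [MeasurableSpace X]
    [BorelSpace X] {Γ : Subgroup (X ≃ₜ X)} (hc : (Γ : Set (X ≃ₜ X)).Countable)
    (hlf : IsLocallyFiniteGroup Γ) {A B : Set X} (hA : IsClopen A) (hB : IsClopen B)
    (hlt : ∀ μ ∈ InvProbMeasures Γ, μ A < μ B) :
    ∃ H ≤ Γ, Finite H ∧ ∀ x, Nat.card {γ : H // γ • x ∈ A} < Nat.card {γ : H // γ • x ∈ B} := by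
  obtain ⟨G, hmono, hfin, hGΓ, hexh⟩ := hlf.exists_monotone_finite_exhaustion hc
  by_contra! hbad
  choose x hx using fun n => hbad (G n) (hGΓ n) (hfin n)
  obtain ⟨m, -, hm⟩ := isCompact_univ.exists_mapClusterPt (f := atTop)
    (u := fun n => orbitFreq (G n) (x n)) (by simp)
  have hcontent : IsClopenContent m := isClosed_setOf_isClopenContent.mem_of_mapClusterPt hm <|
    .of_forall fun n => isClopenContent_orbitFreq (G n) (x n)
  have hinv : ∀ γ ∈ Γ, ∀ C, m (γ ⁻¹' C) = m C := fun γ hγ C => by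
    obtain ⟨n, hn⟩ := hexh γ hγ
    have hclosed : IsClosed {m : Set X → ℝ≥0∞ | m (γ ⁻¹' C) = m C} :=
      isClosed_eq (continuous_apply _) (continuous_apply _)
    exact hclosed.mem_of_mapClusterPt hm <|
      eventually_atTop.2 ⟨n, fun k hk => orbitFreq_preimage (G k) (hmono hk hn) (x k) C⟩
  have hBA : m B ≤ m A := by
    have hclosed : IsClosed {m : Set X → ℝ≥0∞ | m B ≤ m A} :=
      isClosed_le (continuous_apply _) (continuous_apply _)
    exact hclosed.mem_of_mapClusterPt hm <| .of_forall fun n => orbitFreq_le_orbitFreq (G n) (hx n)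
  obtain ⟨μ, hμ, hμm⟩ := hcontent.exists_isProbabilityMeasure
  have hμΓ : μ ∈ InvProbMeasures Γ := by
    refine ⟨hμ, fun γ hγ => .symm <| Measure.ext_of_isClopen fun C hC => ?_⟩
    rw [Measure.map_apply γ.measurable hC.isOpen.measurableSet, hμm C hC,
      hμm _ (hC.preimage γ.continuous), hinv γ hγ]
  exact (hlt μ hμΓ).not_ge (by rwa [hμm A hA, hμm B hB])

theorem MulAction.card_smul_mem_eq {G α : Type*} [Group G] [MulAction G α] (a : α) (P : Set α) :
    Nat.card {g : G // g • a ∈ P} = (P ∩ orbit G a).ncard * Nat.card (stabilizer G a) := by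
  have fiber : ∀ b : ↥(P ∩ orbit G a), {g : G // g • a = b} ≃ stabilizer G a := fun b =>
    let h := b.2.2.choose
    have hh : h • a = b := b.2.2.choose_spec
    { toFun g := ⟨h⁻¹ * g, by simp [mem_stabilizer_iff, mul_smul, g.2, ← hh]⟩
      invFun s := ⟨h * s, by simp [mul_smul, mem_stabilizer_iff.1 s.2, hh]⟩
      left_inv g := by simp
      right_inv s := by simp }
  calc Nat.card {g : G // g • a ∈ P}
      = Nat.card (Σ b : ↥(P ∩ orbit G a), {g : G // g • a = b}) := Nat.card_congr
        { toFun g := ⟨⟨g.1 • a, g.2, g.1, rfl⟩, g.1, rfl⟩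
          invFun b := ⟨b.2.1, by rw [b.2.2]; exact b.1.2.1⟩
          left_inv _ := rfl
          right_inv b := Sigma.subtype_ext (Subtype.ext b.2.2) rfl }
    _ = Nat.card (↥(P ∩ orbit G a) × stabilizer G a) :=
        Nat.card_congr ((Equiv.sigmaCongrRight fiber).trans (Equiv.sigmaEquivProd _ _))
    _ = (P ∩ orbit G a).ncard * Nat.card (stabilizer G a) := by
        rw [Nat.card_prod, Nat.card_coe_set_eq]

namespace Equivalence

variable {Q : Type*} {r : Q → Q → Prop}

theorem ncard_inter_lt_of_insert (hr : Equivalence r) [Finite Q] {a b : Q} {s PB : Set Q}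
    (ha : a ∉ s) (hab : r a b) (hbPB : b ∈ PB) {q : Q}
    (hq : (insert a s ∩ {p | r q p}).ncard < (PB ∩ {p | r q p}).ncard) :
    (s ∩ {p | r q p}).ncard < (PB \ {b} ∩ {p | r q p}).ncard := by
  by_cases hqa : r q a
  · have hqb : b ∈ PB ∩ {p | r q p} := ⟨hbPB, hr.trans hqa hab⟩
    rw [insert_inter_of_mem (t := {p | r q p}) hqa, ncard_insert_of_notMem fun h => ha h.1] at hq
    rw [← inter_sdiff_right_comm, ncard_sdiff_singleton_of_mem hqb]
    omega
  · have hqb : b ∉ PB ∩ {p | r q p} := fun h => hqa (hr.trans h.2 (hr.symm hab))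
    rw [insert_inter_of_notMem (t := {p | r q p}) hqa] at hq
    rwa [← inter_sdiff_right_comm, sdiff_singleton_eq_self hqb]

theorem exists_perm_mapsTo_of_ncard_lt (hr : Equivalence r) [Finite Q] {PA PB : Set Q}
    (h : ∀ a ∈ PA, (PA ∩ {p | r a p}).ncard < (PB ∩ {p | r a p}).ncard) :
    ∃ σ : Equiv.Perm Q, (∀ q, r q (σ q)) ∧ MapsTo σ PA PB := by
  classical
  induction PA, PA.toFinite using Set.Finite.induction_on generalizing PB with
  | empty => exact ⟨1, fun q => hr.refl q, mapsTo_empty _ _⟩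
  | @insert a s ha _ ih =>
    obtain ⟨b, ⟨hbPB, hab⟩, hb⟩ := exists_mem_notMem_of_ncard_lt_ncard (h a (mem_insert a s))
    obtain ⟨σ, hσr, hσ⟩ := ih fun q hq =>
      hr.ncard_inter_lt_of_insert ha hab hbPB (h q (mem_insert_of_mem a hq))
    refine ⟨σ.trans (Equiv.swap (σ a) b), fun q => ?_, ?_⟩
    · simp only [Equiv.trans_apply, Equiv.swap_apply_def]
      split_ifs with h₁ h₂
      · exact σ.injective h₁ ▸ hab
      · exact hr.trans (hr.trans (h₂ ▸ hσr q) (hr.symm hab)) (hσr a)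
      · exact hσr q
    · rintro q (rfl | hq)
      · simpa using hbPB
      · have hσq := hσ hq
        have hqa : σ q ≠ σ a := σ.injective.ne fun h => ha (h ▸ hq)
        simpa [Equiv.swap_apply_of_ne_of_ne hqa hσq.2] using hσq.1

end Equivalence

section Gluing

variable {X Q : Type*} [TopologicalSpace X] {π : X → Q}

theorem IsLocallyConstant.continuous_apply_self {Y : Type*} [TopologicalSpace Y]
    (hπ : IsLocallyConstant π) {f : Q → X → Y} (hf : ∀ q, Continuous (f q)) :
    Continuous fun x => f (π x) x :=
  continuous_iff_continuousAt.2 fun x => (hf (π x)).continuousAt.congr <|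
    (hπ.eventually_eq x).mono fun y hy => by simp only [hy]

theorem IsLocallyConstant.exists_homeomorph_apply_eq (hπ : IsLocallyConstant π)
    (σ : Equiv.Perm Q) (f : Q → X ≃ₜ X) (hf : ∀ x, π (f (π x) x) = σ (π x))
    (hf_symm : ∀ y, π ((f (σ.symm (π y))).symm y) = σ.symm (π y)) :
    ∃ g : X ≃ₜ X, ∀ x, g x = f (π x) x :=
  ⟨{ toFun x := f (π x) x
     invFun y := (f (σ.symm (π y))).symm y
     left_inv x := by simp only [hf, Equiv.symm_apply_apply, Homeomorph.symm_apply_apply]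
     right_inv y := by simp only [hf_symm, Homeomorph.apply_symm_apply]
     continuous_toFun := hπ.continuous_apply_self fun q => (f q).continuous
     continuous_invFun := (hπ.comp σ.symm).continuous_apply_self fun q => (f q).symm.continuous },
   fun _ => rfl⟩

theorem IsFullGroup.mem_of_isLocallyConstant [Finite Q] {Γ : Subgroup (X ≃ₜ X)}
    (hfull : IsFullGroup Γ) (hπ : IsLocallyConstant π) {f : Q → X ≃ₜ X} (hfΓ : ∀ q, f q ∈ Γ)
    {g : X ≃ₜ X} (hg : ∀ x, g x = f (π x) x) : g ∈ Γ := by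
  obtain ⟨n, ⟨e⟩⟩ := Finite.exists_equiv_fin Q
  refine hfull g ⟨n, fun i => π ⁻¹' {e.symm i}, fun i => f (e.symm i),
    fun i => hπ.isClopen_fiber _, fun i => hfΓ _, fun i j hij => ?_, ?_, ?_⟩
  · exact disjoint_left.2 fun x hi hj => hij (e.symm.injective (hi.symm.trans hj))
  · exact eq_univ_of_forall fun x => mem_iUnion.2 ⟨e (π x), by simp⟩
  · intro i x hx
    rw [hg x, show π x = e.symm i from hx]

end Gluing

section FiniteFactor

open MulAction

variable {X Q : Type*} [TopologicalSpace X] {Γ H : Subgroup (X ≃ₜ X)} [MulAction H Q] [Finite Q]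
  {π : X → Q}

theorem IsFullGroup.exists_mem_apply_eq_perm (hfull : IsFullGroup Γ) (hH : H ≤ Γ)
    (hπ : IsLocallyConstant π) (hequiv : ∀ (g : H) x, π (g • x) = g • π x)
    {σ : Equiv.Perm Q} (hσ : ∀ q, σ q ∈ orbit H q) : ∃ γ ∈ Γ, ∀ x, π (γ x) = σ (π x) := by
  choose g hg using fun q => mem_orbit_iff.1 (hσ q)
  obtain ⟨γ, hγ⟩ := hπ.exists_homeomorph_apply_eq σ (fun q => g q)
    (fun x => (hequiv _ x).trans (hg _))
    (fun y => (hequiv _ y).trans (inv_smul_eq_iff.2 (by rw [hg, Equiv.apply_symm_apply])))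
  refine ⟨γ, hfull.mem_of_isLocallyConstant hπ (fun q => hH (g q).2) hγ, fun x => ?_⟩
  rw [hγ, ← hg]
  exact hequiv _ x

theorem IsFullGroup.exists_mem_image_subset_of_factor (hfull : IsFullGroup Γ)
    (hH : H ≤ Γ) (hπ : IsLocallyConstant π) (hequiv : ∀ (g : H) x, π (g • x) = g • π x)
    {A B : Set X} {SA SB : Set Q} (hA : A = π ⁻¹' SA) (hB : B = π ⁻¹' SB)
    (hcount : ∀ x, Nat.card {γ : H // γ • x ∈ A} < Nat.card {γ : H // γ • x ∈ B}) :
    ∃ γ ∈ Γ, (γ : X ≃ₜ X) '' A ⊆ B := by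
  subst hA hB
  have hcard : ∀ x (S : Set Q), Nat.card {γ : H // γ • x ∈ π ⁻¹' S} =
      (S ∩ orbit H (π x)).ncard * Nat.card (stabilizer H (π x)) := fun x S => by
    simp only [mem_preimage, hequiv, card_smul_mem_eq]
  have horbit : ∀ x, orbit H (π x) ⊆ range π := by
    rintro x _ ⟨g, rfl⟩
    exact ⟨g • x, hequiv g x⟩
  have hr : Equivalence fun a p : Q => p ∈ orbit H a := by
    simp only [← orbit_eq_iff]
    exact ⟨fun _ => rfl, Eq.symm, fun h₁ h₂ => h₂.trans h₁⟩
  obtain ⟨σ, hσorbit, hσ⟩ := hr.exists_perm_mapsTo_of_ncard_lt (PA := SA ∩ range π) (PB := SB) <| by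
    rintro _ ⟨-, x, rfl⟩
    have := hcount x
    rw [hcard, hcard] at this
    rw [ofPred_mem_eq, inter_assoc, inter_eq_right.2 (horbit x)]
    exact lt_of_mul_lt_mul_right' this
  obtain ⟨γ, hγΓ, hγ⟩ := hfull.exists_mem_apply_eq_perm hH hπ hequiv hσorbit
  refine ⟨γ, hγΓ, ?_⟩
  rintro _ ⟨x, hx, rfl⟩
  rw [mem_preimage, hγ]
  exact hσ ⟨hx, x, rfl⟩

end FiniteFactor

theorem IsClopen.isLocallyConstant_mem {X : Type*} [TopologicalSpace X] {C : Set X}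
    (hC : IsClopen C) : IsLocallyConstant (· ∈ C) :=
  IsLocallyConstant.iff_isOpen_fiber.2 fun p => by
    by_cases hp : p
    · simpa [hp] using hC.isOpen
    · simpa [hp, ← compl_ofPred] using hC.isClosed

section Itinerary

open Pointwise

variable {X : Type*} [TopologicalSpace X] (H : Subgroup (X ≃ₜ X)) (A : Set X)

-- `itinerary H A x` and `itinerary H B x` determine the atom containing `x` of the Boolean algebra
-- generated by the `H`-translates of `A` and `B`.
def itinerary (x : X) : Set H := {γ | γ⁻¹ • x ∈ A}

theorem itinerary_smul (δ : H) (x : X) : itinerary H A (δ • x) = δ • itinerary H A x := by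
  ext γ
  simp [itinerary, mem_smul_set_iff_inv_smul_mem, mul_smul]

theorem isLocallyConstant_itinerary [Finite H] {A : Set X} (hA : IsClopen A) :
    IsLocallyConstant (itinerary H A) :=
  (IsLocallyConstant.iff_eventually_eq _).2 fun x => by
    have := fun γ : H => (hA.preimage (γ⁻¹ : H).1.continuous).isLocallyConstant_mem.eventually_eq x
    filter_upwards [eventually_all.2 this] with y hy
    ext γ
    exact iff_of_eq (hy γ)

theorem IsFullGroup.exists_mem_image_subset_of_card_lt {Γ : Subgroup (X ≃ₜ X)}
    (hfull : IsFullGroup Γ) (hH : H ≤ Γ) [Finite H] {A B : Set X} (hA : IsClopen A)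
    (hB : IsClopen B)
    (hcount : ∀ x, Nat.card {γ : H // γ • x ∈ A} < Nat.card {γ : H // γ • x ∈ B}) :
    ∃ γ ∈ Γ, (γ : X ≃ₜ X) '' A ⊆ B :=
  hfull.exists_mem_image_subset_of_factor hH
    ((isLocallyConstant_itinerary H hA).prodMk (isLocallyConstant_itinerary H hB))
    (fun δ x => by simp only [itinerary_smul, Prod.smul_mk]) (SA := {q | 1 ∈ q.1})
    (SB := {q | 1 ∈ q.2}) (by ext; simp [itinerary]) (by ext; simp [itinerary]) hcount

end Itinerary

theorem glasner_weiss_subset_general {X : Type*} [TopologicalSpace X] [MeasurableSpace X] [BorelSpace X]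
    (hX : IsCantorSpace X) (Γ : Subgroup (X ≃ₜ X)) (hample : IsAmpleGroup Γ)
    (A B : Set X) (hA : IsClopen A) (hB : IsClopen B)
    (hlt : ∀ μ ∈ InvProbMeasures Γ, μ A < μ B) :
    ∃ γ ∈ Γ, (γ : X ≃ₜ X) '' A ⊆ B := by
  obtain ⟨-, hcompact, hmetrizable, htd, -⟩ := hX
  obtain ⟨hc, hlf, hfull, -⟩ := hample
  obtain ⟨H, hH, hfin, hcount⟩ := exists_finite_subgroup_card_lt hc hlf hA hB hlt
  exact hfull.exists_mem_image_subset_of_card_lt H hH hA hB hcount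

/-- Glasner–Weiss, part 1. -/
theorem glasner_weiss_subset {X : Type*} [TopologicalSpace X] [MeasurableSpace X] [BorelSpace X]
    (hX : IsCantorSpace X) (Γ : Subgroup (X ≃ₜ X)) (hample : IsAmpleGroup Γ)
    (hmin : IsMinimalGroup Γ) (A B : Set X) (hA : IsClopen A) (hB : IsClopen B)
    (hlt : ∀ μ ∈ InvProbMeasures Γ, μ A < μ B) :
    ∃ γ ∈ Γ, (γ : X ≃ₜ X) '' A ⊆ B :=
  glasner_weiss_subset_general hX Γ hample A B hA hB hlt
end

section
/- Let Γ be an ample group over the Cantor space X, and let A, B, A_1, B_1 be clopen subsets of X with A_1 ⊆ A and B_1 ⊆ B. If A ∼_Γ B and A_1 ∼_Γ B_1, then A \ A_1 ∼_Γ B \ B_1. -/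
open MeasureTheory Set

section Glue

variable {X : Type*} [TopologicalSpace X]

lemma homeomorph_mul_apply (f g : X ≃ₜ X) (x : X) : (f * g) x = f (g x) := rfl

lemma homeomorph_one_apply (x : X) : (1 : X ≃ₜ X) x = x := rfl

lemma homeomorph_inv_apply (f : X ≃ₜ X) (x : X) : f⁻¹ x = f.symm x := rfl

lemma glue_aux [CompactSpace X] [T2Space X]
    (Γ : Subgroup (X ≃ₜ X)) (hfull : IsFullGroup Γ) (T : X → X)
    (hbij : Function.Bijective T) (k : ℕ) (O : Fin k → Set X) (w : Fin k → (X ≃ₜ X))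
    (hO : ∀ i, IsClopen (O i)) (hw : ∀ i, w i ∈ Γ)
    (hcov : (⋃ i, O i) = Set.univ)
    (hagree : ∀ i, ∀ x ∈ O i, T x = w i x) :
    ∃ g : X ≃ₜ X, g ∈ Γ ∧ ∀ x, g x = T x := by
  classical
  have hcont : Continuous T := by
    rw [continuous_iff_continuousAt]
    intro x
    have hx : x ∈ ⋃ i, O i := hcov ▸ Set.mem_univ x
    obtain ⟨i, hi⟩ := Set.mem_iUnion.mp hx
    refine ((w i).continuous.continuousAt).congr ?_
    exact Filter.eventuallyEq_of_mem ((hO i).2.mem_nhds hi)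
      fun y hy => (hagree i y hy).symm
  let e : X ≃ X := Equiv.ofBijective T hbij
  have hce : Continuous e := hcont
  let g : X ≃ₜ X := hce.homeoOfEquivCompactToT2
  have hgT : ∀ x, g x = T x := fun x => rfl
  refine ⟨g, ?_, hgT⟩
  apply hfull
  refine ⟨k, fun i => O i \ ⋃ j, ⋃ _ : j < i, O j, w, ?_, hw, ?_, ?_, ?_⟩
  · intro i
    refine (hO i).diff (isClopen_iUnion_of_finite fun j => ?_)
    by_cases hj : j < i
    · simpa [hj] using hO j
    · have h0 : (⋃ _ : j < i, O j) = (∅ : Set X) := by simp [hj]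
      rw [h0]; exact isClopen_empty
  · have key : ∀ i j : Fin k, i < j →
        Disjoint (O i \ ⋃ j', ⋃ _ : j' < i, O j') (O j \ ⋃ j', ⋃ _ : j' < j, O j') := by
      intro i j hij
      refine Set.disjoint_left.mpr ?_
      rintro x ⟨hxO, -⟩ ⟨-, hxn⟩
      exact hxn (Set.mem_iUnion.mpr ⟨i, Set.mem_iUnion.mpr ⟨hij, hxO⟩⟩)
    intro i j hij
    rcases hij.lt_or_gt with h | h
    · exact key i j h
    · exact (key j i h).symm
  · apply Set.eq_univ_of_forall
    intro x
    have hx : ∃ n : ℕ, ∃ h : n < k, x ∈ O ⟨n, h⟩ := by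
      have hx0 : x ∈ ⋃ i, O i := hcov ▸ Set.mem_univ x
      obtain ⟨i, hi⟩ := Set.mem_iUnion.mp hx0
      exact ⟨i.1, i.isLt, by simpa using hi⟩
    obtain ⟨hn, hxn⟩ := Nat.find_spec hx
    refine Set.mem_iUnion.mpr ⟨⟨Nat.find hx, hn⟩, hxn, ?_⟩
    intro hmem
    obtain ⟨j, hj⟩ := Set.mem_iUnion.mp hmem
    obtain ⟨hji, hxj⟩ := Set.mem_iUnion.mp hj
    exact Nat.find_min hx (show (j : ℕ) < Nat.find hx from hji) ⟨j.isLt, by simpa using hxj⟩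
  · intro i x hx
    exact (hgT x).trans (hagree i x hx.1)

end Glue
/-- differences of `Γ`-equivalent clopen sets are `Γ`-equivalent. -/
theorem clopenEquiv_diff {X : Type*} [TopologicalSpace X]
    (hX : IsCantorSpace X) (Γ : Subgroup (X ≃ₜ X)) (hample : IsAmpleGroup Γ)
    (A B A₁ B₁ : Set X) (hA : IsClopen A) (hB : IsClopen B)
    (hA₁ : IsClopen A₁) (hB₁ : IsClopen B₁) (hA₁A : A₁ ⊆ A) (hB₁B : B₁ ⊆ B)
    (hAB : ClopenEquiv Γ A B) (hAB₁ : ClopenEquiv Γ A₁ B₁) :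
    ClopenEquiv Γ (A \ A₁) (B \ B₁) := by
  classical
  obtain ⟨-, hcomp, hmetr, -, -⟩ := hX
  haveI := hcomp
  haveI := hmetr
  obtain ⟨-, hlf, hfull, -⟩ := hample
  obtain ⟨γ, hγ, hγA⟩ := hAB
  obtain ⟨δ, hδ, hδA⟩ := hAB₁
  have hγm : ∀ x, γ x ∈ B ↔ x ∈ A := by
    intro x
    rw [← hγA]
    exact ⟨fun ⟨a, ha, he⟩ => by rwa [← γ.injective he], fun h => ⟨x, h, rfl⟩⟩
  have hδm : ∀ x, δ x ∈ B₁ ↔ x ∈ A₁ := by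
    intro x
    rw [← hδA]
    exact ⟨fun ⟨a, ha, he⟩ => by rwa [← δ.injective he], fun h => ⟨x, h, rfl⟩⟩
  set η : X ≃ₜ X := δ⁻¹ * γ with hηdef
  have hηx : ∀ x, η x = δ.symm (γ x) := fun x => rfl
  have hηinv : ∀ u, η⁻¹ u = γ.symm (δ u) := by
    intro u
    rw [hηdef, mul_inv_rev, inv_inv]
    rfl
  have hηG : η ∈ Γ := mul_mem (inv_mem hδ) hγ
  -- finite order of η
  obtain ⟨m, hm1, hmη⟩ : ∃ m, 1 ≤ m ∧ η ^ m = 1 := by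
    have hsub : (({γ, δ} : Finset (X ≃ₜ X)) : Set (X ≃ₜ X)) ⊆ (Γ : Set (X ≃ₜ X)) := by
      intro g hg
      simp only [Finset.coe_insert, Finset.coe_singleton, Set.mem_insert_iff,
        Set.mem_singleton_iff] at hg
      rcases hg with rfl | rfl
      · exact hγ
      · exact hδ
    have hfin := hlf {γ, δ} hsub
    have hmemc : ∀ n : ℕ, η ^ n ∈ Subgroup.closure (({γ, δ} : Finset (X ≃ₜ X)) : Set (X ≃ₜ X)) := by
      intro n
      apply pow_mem
      rw [hηdef]
      exact mul_mem (inv_mem (Subgroup.subset_closure (by simp)))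
        (Subgroup.subset_closure (by simp))
    obtain ⟨a, -, b, -, hab, heq⟩ := Set.infinite_univ.exists_ne_map_eq_of_mapsTo
      (f := fun n : ℕ => η ^ n) (t := (Subgroup.closure (({γ, δ} : Finset (X ≃ₜ X)) : Set (X ≃ₜ X)) : Set (X ≃ₜ X))) (fun n _ => hmemc n) hfin
    have heq' : η ^ a = η ^ b := heq
    rcases hab.lt_or_gt with h | h
    · refine ⟨b - a, by omega, ?_⟩
      have h2 : η ^ a * η ^ (b - a) = η ^ a * 1 := by
        rw [mul_one, ← pow_add, Nat.add_sub_cancel' h.le]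
        exact heq'.symm
      exact mul_left_cancel h2
    · refine ⟨a - b, by omega, ?_⟩
      have h2 : η ^ b * η ^ (a - b) = η ^ b * 1 := by
        rw [mul_one, ← pow_add, Nat.add_sub_cancel' h.le]
        exact heq'
      exact mul_left_cancel h2
  have hstep : ∀ (x : X) (k : ℕ), γ ((η ^ k) x) ∈ B₁ → (η ^ (k + 1)) x ∈ A₁ := by
    intro x k hk
    have h1 : (η ^ (k + 1)) x = δ.symm (γ ((η ^ k) x)) := by
      rw [pow_succ']
      rfl
    rw [h1]
    exact (hδm _).mp (by rw [δ.apply_symm_apply]; exact hk)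
  have htrap : ∀ x : X, (∀ k < m, γ ((η ^ k) x) ∈ B₁) → x ∈ A₁ := by
    intro x h
    have h2 := hstep x (m - 1) (h _ (by omega))
    rw [Nat.sub_add_cancel hm1, hmη] at h2
    exact h2
  set Wq : ℕ → Set X := fun n =>
    (A \ A₁) ∩ ((⋂ k ∈ Finset.range n, (fun x => γ ((η ^ k) x)) ⁻¹' B₁) ∩
      ((fun x => γ ((η ^ n) x)) ⁻¹' B₁ᶜ)) with hWq
  have hWmem : ∀ n x, x ∈ Wq n ↔
      (x ∈ A \ A₁ ∧ (∀ k < n, γ ((η ^ k) x) ∈ B₁) ∧ γ ((η ^ n) x) ∉ B₁) := by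
    intro n x
    constructor
    · rintro ⟨h1, h2, h3⟩
      exact ⟨h1, fun k hk => Set.mem_iInter₂.mp h2 k (Finset.mem_range.mpr hk), h3⟩
    · rintro ⟨h1, h2, h3⟩
      exact ⟨h1, Set.mem_iInter₂.mpr fun k hk => h2 k (Finset.mem_range.mp hk), h3⟩
  have hWclopen : ∀ n, IsClopen (Wq n) := by
    intro n
    have hc : ∀ k : ℕ, Continuous fun x => γ ((η ^ k) x) :=
      fun k => γ.continuous.comp (η ^ k).continuous
    refine (hA.diff hA₁).inter (IsClopen.inter ?_ ((hB₁.compl).preimage (hc n)))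
    exact Set.Finite.isClopen_biInter (Finset.range n).finite_toSet
      fun k _ => hB₁.preimage (hc k)
  have hWdisj : ∀ n n', n < n' → ∀ x, x ∈ Wq n → x ∈ Wq n' → False := by
    intro n n' h x hx hx'
    exact ((hWmem n x).mp hx).2.2 (((hWmem n' x).mp hx').2.1 n h)
  have hWcover : ∀ x ∈ A \ A₁, ∃ n < m, x ∈ Wq n := by
    intro x hx
    have hex : ∃ n, γ ((η ^ n) x) ∉ B₁ := by
      by_contra h
      push_neg at h
      exact hx.2 (htrap x fun k _ => h k)
    refine ⟨Nat.find hex, ?_, (hWmem _ x).mpr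
      ⟨hx, fun k hk => not_not.mp (Nat.find_min hex hk), Nat.find_spec hex⟩⟩
    by_contra hge
    push_neg at hge
    exact hx.2 (htrap x fun k hk => not_not.mp (Nat.find_min hex (lt_of_lt_of_le hk hge)))
  set nn : X → ℕ := fun x => if h : ∃ n, γ ((η ^ n) x) ∉ B₁ then Nat.find h else 0 with hnn
  set T : X → X := fun x =>
    if x ∈ A₁ then δ x else if x ∈ A then γ ((η ^ nn x) x) else γ x with hT
  have hWnn : ∀ n x, x ∈ Wq n → nn x = n := by
    intro n x hx
    obtain ⟨hx1, hx2, hx3⟩ := (hWmem n x).mp hx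
    have hex : ∃ n, γ ((η ^ n) x) ∉ B₁ := ⟨n, hx3⟩
    simp only [hnn, dif_pos hex]
    exact le_antisymm (Nat.find_le hx3)
      ((Nat.le_find_iff hex n).mpr fun k hk => not_not.mpr (hx2 k hk))
  have hTW : ∀ n x, x ∈ Wq n → T x = γ ((η ^ n) x) := by
    intro n x hx
    obtain ⟨⟨hxA, hxA1⟩, -, -⟩ := (hWmem n x).mp hx
    simp only [hT, if_neg hxA1, if_pos hxA, hWnn n x hx]
  have hT1 : ∀ x ∈ A₁, T x = δ x := fun x hx => by simp only [hT, if_pos hx]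
  have hT3 : ∀ x, x ∉ A → T x = γ x := fun x hx => by
    simp only [hT, if_neg (fun h => hx (hA₁A h)), if_neg hx]
  have hR1 : ∀ x ∈ A₁, T x ∈ B₁ := fun x hx => by
    rw [hT1 x hx]; exact (hδm x).mpr hx
  have hR2 : ∀ n x, x ∈ Wq n → T x ∈ B \ B₁ := by
    intro n x hx
    obtain ⟨⟨hxA, hxA1⟩, h2, h3⟩ := (hWmem n x).mp hx
    rw [hTW n x hx]
    refine ⟨?_, h3⟩
    rcases n with _ | k
    · rw [pow_zero]
      exact (hγm x).mpr hxA
    · exact (hγm _).mpr (hA₁A (hstep x k (h2 k (Nat.lt_succ_self k))))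
  have hR3 : ∀ x, x ∉ A → T x ∉ B := fun x hx => by
    rw [hT3 x hx]; exact fun h => hx ((hγm x).mp h)
  have hsur1 : ∀ y ∈ B₁, ∃ x ∈ A₁, T x = y := by
    intro y hy
    have hx : δ.symm y ∈ A₁ := (hδm _).mp (by rw [δ.apply_symm_apply]; exact hy)
    exact ⟨δ.symm y, hx, by rw [hT1 _ hx, δ.apply_symm_apply]⟩
  have hsur3 : ∀ y, y ∉ B → ∃ z, z ∉ A ∧ T z = y := by
    intro y hy
    have hz : γ.symm y ∉ A := fun h => hy (by
      rw [← γ.apply_symm_apply y]; exact (hγm _).mpr h)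
    exact ⟨γ.symm y, hz, by rw [hT3 _ hz, γ.apply_symm_apply]⟩
  have hsur2 : ∀ y ∈ B \ B₁, ∃ n < m, ∃ x ∈ Wq n, T x = y := by
    intro y hy
    set xs : ℕ → X := fun j => ((η⁻¹) ^ j) (γ.symm y) with hxs
    have hxs0 : xs 0 = γ.symm y := by simp only [hxs, pow_zero]; rfl
    have hxsucc : ∀ j, xs (j + 1) = γ.symm (δ (xs j)) := by
      intro j
      have h1 : ((η⁻¹) ^ (j + 1)) (γ.symm y) = η⁻¹ (((η⁻¹) ^ j) (γ.symm y)) := by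
        rw [pow_succ']; rfl
      simp only [hxs]
      exact h1.trans (hηinv _)
    have hγxs : ∀ j, γ (xs (j + 1)) = δ (xs j) := fun j => by
      rw [hxsucc j, γ.apply_symm_apply]
    have hC : ∃ j, xs j ∉ A₁ := by
      by_contra h
      push_neg at h
      have hpw : η⁻¹ ^ m = 1 := by rw [inv_pow, hmη, inv_one]
      have h0 : xs m = xs 0 := by
        simp only [hxs]
        rw [hpw, pow_zero]
      have hym : y = δ (xs (m - 1)) := by
        have h3 := hγxs (m - 1)
        rw [Nat.sub_add_cancel hm1, h0, hxs0, γ.apply_symm_apply] at h3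
        exact h3
      exact hy.2 (hym ▸ (hδm _).mpr (h (m - 1)))
    have hxj1 : xs (Nat.find hC) ∉ A₁ := Nat.find_spec hC
    have hprev : ∀ i < Nat.find hC, xs i ∈ A₁ := fun i hi => not_not.mp (Nat.find_min hC hi)
    set j := Nat.find hC with hj
    have hxjA : xs j ∈ A := by
      rcases Nat.eq_zero_or_pos j with h0 | hpos
      · rw [h0, hxs0]
        exact (hγm _).mp (by rw [γ.apply_symm_apply]; exact hy.1)
      · obtain ⟨i, hji⟩ : ∃ i, j = i + 1 := ⟨j - 1, by omega⟩
        rw [hji, hxsucc i]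
        refine (hγm _).mp ?_
        rw [γ.apply_symm_apply]
        exact hB₁B ((hδm _).mpr (hprev i (by omega)))
    have hkey : ∀ k, k ≤ j → (η ^ k) (xs j) = xs (j - k) := by
      intro k
      induction k with
      | zero => intro _; rw [pow_zero, Nat.sub_zero]; rfl
      | succ k ih =>
        intro hk
        have h1 : (η ^ (k + 1)) (xs j) = η ((η ^ k) (xs j)) := by rw [pow_succ']; rfl
        rw [h1, ih (by omega)]
        have h2 : j - k = (j - (k + 1)) + 1 := by omega
        rw [h2, hxsucc, hηx, γ.apply_symm_apply, δ.symm_apply_apply]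
    have hcond1 : ∀ k < j, γ ((η ^ k) (xs j)) ∈ B₁ := by
      intro k hk
      rw [hkey k hk.le]
      have h2 : j - k = (j - k - 1) + 1 := by omega
      rw [h2, hγxs]
      exact (hδm _).mpr (hprev _ (by omega))
    have hcond2 : γ ((η ^ j) (xs j)) = y := by
      rw [hkey j le_rfl, Nat.sub_self, hxs0, γ.apply_symm_apply]
    have hxW : xs j ∈ Wq j := (hWmem _ _).mpr
      ⟨⟨hxjA, hxj1⟩, hcond1, by rw [hcond2]; exact hy.2⟩
    have hjm : j < m := by
      rcases hWcover (xs j) ⟨hxjA, hxj1⟩ with ⟨n, hnm, hn⟩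
      rcases lt_trichotomy n j with h | h | h
      · exact (hWdisj n j h _ hn hxW).elim
      · rwa [h] at hnm
      · exact (hWdisj j n h _ hxW hn).elim
    exact ⟨j, hjm, xs j, hxW, by rw [hTW _ _ hxW, hcond2]⟩
  -- injectivity
  have hclass : ∀ z : X, z ∈ A₁ ∨ (∃ n, z ∈ Wq n) ∨ z ∉ A := by
    intro z
    by_cases hz1 : z ∈ A₁
    · exact Or.inl hz1
    by_cases hz : z ∈ A
    · obtain ⟨n, -, hn⟩ := hWcover z ⟨hz, hz1⟩
      exact Or.inr (Or.inl ⟨n, hn⟩)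
    · exact Or.inr (Or.inr hz)
  have hinj : Function.Injective T := by
    intro x x' he
    have main : ∀ (a b : X) (p q : ℕ), p ≤ q → (η ^ p) a = (η ^ q) b →
        (∀ k < q, γ ((η ^ k) b) ∈ B₁) → a ∉ A₁ → a = b := by
      intro a b p q hpq heq hb ha1
      have hq : η ^ q = η ^ p * η ^ (q - p) := by
        rw [← pow_add]; congr 1; omega
      have heq2 : (η ^ p) a = (η ^ p) ((η ^ (q - p)) b) := by rw [heq, hq]; rfl
      have heq3 : a = (η ^ (q - p)) b := (η ^ p).injective heq2
      rcases Nat.eq_zero_or_pos (q - p) with h0 | hpos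
      · rw [h0, pow_zero] at heq3
        exact heq3
      · exfalso
        obtain ⟨e, he0⟩ : ∃ e, q - p = e + 1 := ⟨q - p - 1, by omega⟩
        rw [he0] at heq3
        exact ha1 (by rw [heq3]; exact hstep b e (hb e (by omega)))
    rcases hclass x with hx | ⟨n, hx⟩ | hx <;> rcases hclass x' with hx' | ⟨n', hx'⟩ | hx'
    · rw [hT1 x hx, hT1 x' hx'] at he
      exact δ.injective he
    · exfalso
      have h1 := hR1 x hx
      rw [he] at h1
      exact (hR2 n' x' hx').2 h1
    · exfalso
      have h1 := hR1 x hx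
      rw [he] at h1
      exact hR3 x' hx' (hB₁B h1)
    · exfalso
      have h1 := hR1 x' hx'
      rw [← he] at h1
      exact (hR2 n x hx).2 h1
    · obtain ⟨⟨hxA, hxA1⟩, hx2, hx3⟩ := (hWmem n x).mp hx
      obtain ⟨⟨hxA', hxA1'⟩, hx2', hx3'⟩ := (hWmem n' x').mp hx'
      rw [hTW n x hx, hTW n' x' hx'] at he
      have he2 : (η ^ n) x = (η ^ n') x' := γ.injective he
      rcases le_total n n' with h | h
      · exact main x x' n n' h he2 hx2' hxA1
      · exact (main x' x n' n h he2.symm hx2 hxA1').symm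
    · exfalso
      have h1 := (hR2 n x hx).1
      rw [he] at h1
      exact hR3 x' hx' h1
    · exfalso
      have h1 := hR1 x' hx'
      rw [← he] at h1
      exact hR3 x hx (hB₁B h1)
    · exfalso
      have h1 := (hR2 n' x' hx').1
      rw [← he] at h1
      exact hR3 x hx h1
    · rw [hT3 x hx, hT3 x' hx'] at he
      exact γ.injective he
  have hsurj : Function.Surjective T := by
    intro y
    by_cases hy1 : y ∈ B₁
    · obtain ⟨x, -, hx⟩ := hsur1 y hy1
      exact ⟨x, hx⟩
    by_cases hy : y ∈ B
    · obtain ⟨n, -, x, -, hx⟩ := hsur2 y ⟨hy, hy1⟩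
      exact ⟨x, hx⟩
    · obtain ⟨x, -, hx⟩ := hsur3 y hy
      exact ⟨x, hx⟩
  -- glue
  set O : Fin (m + 2) → Set X := fun i =>
    if (i : ℕ) < m then Wq i else if (i : ℕ) = m then A₁ else Aᶜ with hO
  set w : Fin (m + 2) → (X ≃ₜ X) := fun i =>
    if (i : ℕ) < m then γ * η ^ (i : ℕ) else if (i : ℕ) = m then δ else γ with hw
  have hOclopen : ∀ i, IsClopen (O i) := by
    intro i
    by_cases h : (i : ℕ) < m
    · simp only [hO, if_pos h]; exact hWclopen i
    by_cases h2 : (i : ℕ) = m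
    · simp only [hO, if_neg h, if_pos h2]; exact hA₁
    · simp only [hO, if_neg h, if_neg h2]; exact hA.compl
  have hwΓ : ∀ i, w i ∈ Γ := by
    intro i
    by_cases h : (i : ℕ) < m
    · simp only [hw, if_pos h]; exact mul_mem hγ (pow_mem hηG _)
    by_cases h2 : (i : ℕ) = m
    · simp only [hw, if_neg h, if_pos h2]; exact hδ
    · simp only [hw, if_neg h, if_neg h2]; exact hγ
  have hOcov : (⋃ i, O i) = Set.univ := by
    apply Set.eq_univ_of_forall
    intro x
    by_cases hx1 : x ∈ A₁
    · refine Set.mem_iUnion.mpr ⟨⟨m, by omega⟩, ?_⟩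
      show x ∈ (if m < m then Wq m else if m = m then A₁ else Aᶜ)
      rw [if_neg (lt_irrefl m), if_pos rfl]
      exact hx1
    by_cases hx : x ∈ A
    · obtain ⟨n, hnm, hn⟩ := hWcover x ⟨hx, hx1⟩
      refine Set.mem_iUnion.mpr ⟨⟨n, by omega⟩, ?_⟩
      show x ∈ (if n < m then Wq n else if n = m then A₁ else Aᶜ)
      rw [if_pos (show n < m from hnm)]
      exact hn
    · refine Set.mem_iUnion.mpr ⟨⟨m + 1, by omega⟩, ?_⟩
      show x ∈ (if m + 1 < m then Wq (m + 1) else if m + 1 = m then A₁ else Aᶜ)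
      rw [if_neg (by omega : ¬ m + 1 < m), if_neg (by omega : ¬ m + 1 = m)]
      exact hx
  have hagree : ∀ i, ∀ x ∈ O i, T x = w i x := by
    intro i x hx
    by_cases h : (i : ℕ) < m
    · simp only [hO, if_pos h] at hx
      simp only [hw, if_pos h]
      exact hTW _ _ hx
    by_cases h2 : (i : ℕ) = m
    · simp only [hO, if_neg h, if_pos h2] at hx
      simp only [hw, if_neg h, if_pos h2]
      exact hT1 x hx
    · simp only [hO, if_neg h, if_neg h2] at hx
      simp only [hw, if_neg h, if_neg h2]
      exact hT3 x hx
  obtain ⟨g, hgΓ, hg⟩ := glue_aux Γ hfull T ⟨hinj, hsurj⟩ (m + 2) O w hOclopen hwΓ hOcov hagree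
  refine ⟨g, hgΓ, ?_⟩
  ext y
  constructor
  · rintro ⟨x, hx, rfl⟩
    obtain ⟨n, -, hn⟩ := hWcover x hx
    rw [hg]
    exact hR2 n x hn
  · intro hy
    obtain ⟨n, -, x, hx, hTx⟩ := hsur2 y hy
    obtain ⟨hx1, -, -⟩ := (hWmem n x).mp hx
    exact ⟨x, hx1, by rw [hg]; exact hTx⟩
end

section
/- Let Γ be an ample group over the Cantor space X acting minimally, and let K be a closed Γ-thin subset of X. Then for every ε > 0 there exists a clopen subset U of X such that K ⊆ U and μ(U) ≤ ε for every μ ∈ M(Γ). -/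
open MeasureTheory Set

open Filter Topology in
/-- In a compact Hausdorff totally disconnected space, a compact subset of an open set
is contained in a clopen subset of the open set. -/
lemma exists_clopen_between' {Y : Type*} [TopologicalSpace Y] [CompactSpace Y] [T2Space Y]
    [TotallyDisconnectedSpace Y] {F O : Set Y} (hF : IsCompact F) (hO : IsOpen O)
    (hFO : F ⊆ O) : ∃ V : Set Y, IsClopen V ∧ F ⊆ V ∧ V ⊆ O := by
  have hch : ∀ x : F, ∃ V : Set Y, IsClopen V ∧ (x : Y) ∈ V ∧ V ⊆ O := fun x =>
    compact_exists_isClopen_in_isOpen hO (hFO x.2)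
  choose V hVclopen hxV hVO using hch
  obtain ⟨t, ht⟩ := hF.elim_finite_subcover V (fun x => (hVclopen x).isOpen)
    (fun x hx => Set.mem_iUnion.2 ⟨⟨x, hx⟩, hxV ⟨x, hx⟩⟩)
  refine ⟨⋃ x ∈ t, V x, isClopen_biUnion_finset (fun x _ => hVclopen x), ht, ?_⟩
  exact Set.iUnion₂_subset fun x _ => hVO x

open Filter Topology ENNReal NNReal in
/-- a thin closed set is contained in clopen sets of uniformly small measure. -/
theorem thin_subset_small_clopen {X : Type*} [TopologicalSpace X] [MeasurableSpace X]
    [BorelSpace X] (hX : IsCantorSpace X) (Γ : Subgroup (X ≃ₜ X)) (hample : IsAmpleGroup Γ)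
    (hmin : IsMinimalGroup Γ) (K : Set X) (hK : IsClosed K) (hthin : IsThin Γ K) :
    ∀ ε : ENNReal, 0 < ε → ∃ U : Set X, IsClopen U ∧ K ⊆ U ∧
      ∀ μ ∈ InvProbMeasures Γ, μ U ≤ ε := by
  obtain ⟨hne, hcomp, hmetr, htd, -⟩ := hX
  haveI := hne; haveI := hcomp; haveI := hmetr; haveI := htd
  letI : MetricSpace X := TopologicalSpace.metrizableSpaceMetric X
  haveI : SecondCountableTopology X := inferInstance
  intro ε hε
  by_contra hcon
  push_neg at hcon
  -- Step 1: a decreasing sequence of clopen sets with intersection `K`.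
  obtain ⟨T, hTc, hTU⟩ := TopologicalSpace.isOpen_iUnion_countable
      (fun C : {C : Set X // IsClopen C ∧ K ⊆ C} => (C : Set X)ᶜ)
      (fun C => C.2.1.compl.isOpen)
  set S : Set (Set X) := insert Set.univ ((fun C : {C : Set X // IsClopen C ∧ K ⊆ C} =>
      (C : Set X)) '' T) with hS
  have hSco : S.Countable := ((hTc.image _).insert _)
  obtain ⟨f, hf⟩ := hSco.exists_eq_range ⟨Set.univ, Set.mem_insert _ _⟩
  have hfS : ∀ n, f n ∈ S := fun n => hf ▸ Set.mem_range_self n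
  have hfcl : ∀ n, IsClopen (f n) ∧ K ⊆ f n := by
    intro n
    rcases hfS n with h | h
    · rw [h]; exact ⟨isClopen_univ, Set.subset_univ K⟩
    · obtain ⟨C, -, h⟩ := h; rw [← h]; exact C.2
  set U : ℕ → Set X := fun n => ⋂ i ∈ Finset.range (n + 1), f i with hUdef
  have hUclopen : ∀ n, IsClopen (U n) := fun n => isClopen_biInter_finset fun i _ => (hfcl i).1
  have hKU : ∀ n, K ⊆ U n := fun n => Set.subset_iInter₂ fun i _ => (hfcl i).2
  have hUanti : Antitone U := by
    intro m n hmn x hx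
    simp only [hUdef, Set.mem_iInter] at hx ⊢
    intro i hi
    exact hx i (Finset.mem_range.2 (lt_of_lt_of_le (Finset.mem_range.1 hi) (by omega)))
  have hUK : (⋂ n, U n) = K := by
    apply Set.Subset.antisymm
    · intro x hx
      by_contra hxK
      have hxf : ∀ i, x ∈ f i := by
        intro i
        have := Set.mem_iInter.1 hx i
        simp only [hUdef, Set.mem_iInter] at this
        exact this i (Finset.mem_range.2 (by omega))
      obtain ⟨V, hV, hxV, hVK⟩ := compact_exists_isClopen_in_isOpen hK.isOpen_compl hxK
      have hD : x ∈ ⋃ C : {C : Set X // IsClopen C ∧ K ⊆ C}, (C : Set X)ᶜ := by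
        refine Set.mem_iUnion.2 ⟨⟨Vᶜ, hV.compl, Set.subset_compl_comm.mp hVK⟩, ?_⟩
        simpa using hxV
      rw [← hTU] at hD
      obtain ⟨C, hCT, hxC⟩ := Set.mem_iUnion₂.1 hD
      have hCS : (C : Set X) ∈ S := Set.mem_insert_of_mem _ (Set.mem_image_of_mem _ hCT)
      rw [hf] at hCS
      obtain ⟨i, hi⟩ := hCS
      exact hxC (hi ▸ hxf i)
    · exact Set.subset_iInter fun n => hKU n
  -- Step 2: choose invariant measures giving the clopen sets large mass.
  have hμex : ∀ n, ∃ ν ∈ InvProbMeasures Γ, ε < ν (U n) := fun n =>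
    hcon (U n) (hUclopen n) (hKU n)
  choose μs hμs hεμ using hμex
  have hprob : ∀ n, IsProbabilityMeasure (μs n) := fun n => (hμs n).1
  have hinv : ∀ n, ∀ γ ∈ Γ, Measure.map (γ : X → X) (μs n) = μs n := fun n => (hμs n).2
  -- Step 3: the ultrafilter limit `lam` of the measures, on all sets.
  set φ : Ultrafilter ℕ := Ultrafilter.of Filter.atTop with hφdef
  have hφ : (φ : Filter ℕ) ≤ Filter.atTop := Ultrafilter.of_le _
  set lam : Set X → ℝ≥0∞ := fun A => (φ.map (fun n => μs n A)).lim with hlamdef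
  have hlam : ∀ A : Set X, Tendsto (fun n => μs n A) φ (𝓝 (lam A)) := by
    intro A
    have h := (φ.map (fun n => μs n A)).le_nhds_lim
    rwa [Ultrafilter.coe_map] at h
  have hlam_le_one : ∀ A, lam A ≤ 1 := fun A =>
    le_of_tendsto (hlam A) (Eventually.of_forall fun n => by
      haveI := hprob n; exact prob_le_one)
  have hlam_ne_top : ∀ A, lam A ≠ ⊤ := fun A =>
    ((hlam_le_one A).trans_lt ENNReal.one_lt_top).ne
  have hlam_univ : lam Set.univ = 1 := by
    refine tendsto_nhds_unique (hlam _) ?_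
    have h : (fun n => μs n Set.univ) = fun _ => (1 : ℝ≥0∞) := by
      funext n; haveI := hprob n; exact measure_univ
    rw [h]; exact tendsto_const_nhds
  have hlam_mono : ∀ {A B : Set X}, A ⊆ B → lam A ≤ lam B := fun {A B} h =>
    le_of_tendsto_of_tendsto' (hlam A) (hlam B) fun n => measure_mono h
  have hlam_union_le : ∀ A B : Set X, lam (A ∪ B) ≤ lam A + lam B := fun A B =>
    le_of_tendsto_of_tendsto' (hlam _) ((hlam A).add (hlam B)) fun n => measure_union_le A B
  have hlam_add : ∀ {A B : Set X}, Disjoint A B → MeasurableSet B →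
      lam (A ∪ B) = lam A + lam B := by
    intro A B hd hB
    refine tendsto_nhds_unique (hlam _) ?_
    have h : (fun n => μs n (A ∪ B)) = fun n => μs n A + μs n B := by
      funext n; exact measure_union hd hB
    rw [h]; exact (hlam A).add (hlam B)
  have hlam_inv : ∀ γ ∈ Γ, ∀ A : Set X, MeasurableSet A →
      lam ((γ : X ≃ₜ X) ⁻¹' A) = lam A := by
    intro γ hγ A hA
    refine tendsto_nhds_unique (hlam _) ?_
    have h : (fun n => μs n ((γ : X ≃ₜ X) ⁻¹' A)) = fun n => μs n A := by
      funext n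
      conv_rhs => rw [← hinv n γ hγ]
      rw [Measure.map_apply (γ : X ≃ₜ X).continuous.measurable hA]
    rw [h]; exact hlam A
  have hlam_eps : ∀ m, ε ≤ lam (U m) := by
    intro m
    refine ge_of_tendsto (hlam (U m)) (Filter.Eventually.filter_mono hφ ?_)
    filter_upwards [Filter.eventually_ge_atTop m] with n hn
    exact le_trans (le_of_lt (hεμ n)) (measure_mono (hUanti hn))
  -- Step 4: the content obtained by approximating compacts by clopen sets from outside.
  set c : TopologicalSpace.Compacts X → ℝ≥0∞ :=
    fun F => ⨅ (C : Set X) (_ : IsClopen C ∧ (F : Set X) ⊆ C), lam C with hcdef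
  have hc_le : ∀ (F : TopologicalSpace.Compacts X) (C : Set X), IsClopen C →
      (F : Set X) ⊆ C → c F ≤ lam C := fun F C h1 h2 => iInf₂_le C ⟨h1, h2⟩
  have hc_ne_top : ∀ F, c F ≠ ⊤ := fun F =>
    (((hc_le F Set.univ isClopen_univ (Set.subset_univ _)).trans
      (hlam_le_one _)).trans_lt ENNReal.one_lt_top).ne
  have hc_clopen : ∀ (C : Set X) (hC : IsClopen C) (hcp : IsCompact C),
      c ⟨C, hcp⟩ = lam C := by
    intro C hC hcp
    refine le_antisymm (hc_le _ C hC subset_rfl) (le_iInf₂ fun D hD => hlam_mono hD.2)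
  have hc_mono : ∀ F₁ F₂ : TopologicalSpace.Compacts X, (F₁ : Set X) ⊆ F₂ → c F₁ ≤ c F₂ :=
    fun F₁ F₂ h => le_iInf₂ fun C hC => hc_le F₁ C hC.1 (h.trans hC.2)
  have hc_sup_le : ∀ F₁ F₂ : TopologicalSpace.Compacts X, c (F₁ ⊔ F₂) ≤ c F₁ + c F₂ := by
    intro F₁ F₂
    refine ENNReal.le_of_forall_pos_le_add fun δ hδ _ => ?_
    have hd2 : ((δ : ℝ≥0∞) / 2) ≠ 0 := by
      simp [ENNReal.div_eq_zero_iff, hδ.ne']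
    have hex : ∀ F : TopologicalSpace.Compacts X,
        ∃ C : Set X, (IsClopen C ∧ (F : Set X) ⊆ C) ∧ lam C < c F + (δ : ℝ≥0∞) / 2 := by
      intro F
      have h1 : c F < c F + (δ : ℝ≥0∞) / 2 := ENNReal.lt_add_right (hc_ne_top F) hd2
      conv_lhs at h1 => rw [hcdef]
      simp only [iInf_lt_iff] at h1
      obtain ⟨C, hC, hlt⟩ := h1
      exact ⟨C, hC, hlt⟩
    obtain ⟨C₁, hC₁, hlt₁⟩ := hex F₁
    obtain ⟨C₂, hC₂, hlt₂⟩ := hex F₂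
    have hsub : ((F₁ ⊔ F₂ : TopologicalSpace.Compacts X) : Set X) ⊆ C₁ ∪ C₂ := by
      rw [TopologicalSpace.Compacts.coe_sup]
      exact Set.union_subset_union hC₁.2 hC₂.2
    calc c (F₁ ⊔ F₂) ≤ lam (C₁ ∪ C₂) := hc_le _ _ (hC₁.1.union hC₂.1) hsub
      _ ≤ lam C₁ + lam C₂ := hlam_union_le _ _
      _ ≤ (c F₁ + (δ : ℝ≥0∞) / 2) + (c F₂ + (δ : ℝ≥0∞) / 2) := add_le_add hlt₁.le hlt₂.le
      _ = c F₁ + c F₂ + (δ : ℝ≥0∞) := by rw [add_add_add_comm, ENNReal.add_halves]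
  have hc_sup_disjoint : ∀ F₁ F₂ : TopologicalSpace.Compacts X,
      Disjoint (F₁ : Set X) (F₂ : Set X) → c F₁ + c F₂ ≤ c (F₁ ⊔ F₂) := by
    intro F₁ F₂ hd
    obtain ⟨V, hV, hF₁V, hVO⟩ := exists_clopen_between' F₁.2 F₂.2.isClosed.isOpen_compl
      hd.subset_compl_right
    refine le_iInf₂ fun C hC => ?_
    have hsub₁ : (F₁ : Set X) ⊆ C := by
      refine Set.Subset.trans ?_ hC.2
      rw [TopologicalSpace.Compacts.coe_sup]; exact Set.subset_union_left
    have hsub₂ : (F₂ : Set X) ⊆ C := by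
      refine Set.Subset.trans ?_ hC.2
      rw [TopologicalSpace.Compacts.coe_sup]; exact Set.subset_union_right
    have h1 : c F₁ ≤ lam (C ∩ V) := hc_le _ _ (hC.1.inter hV)
      (Set.subset_inter hsub₁ hF₁V)
    have h2 : c F₂ ≤ lam (C ∩ Vᶜ) := hc_le _ _ (hC.1.inter hV.compl)
      (Set.subset_inter hsub₂ (Set.subset_compl_comm.mp hVO))
    have h3 : lam (C ∩ V) + lam (C ∩ Vᶜ) = lam C := by
      rw [← hlam_add (Disjoint.mono Set.inter_subset_right Set.inter_subset_right
          disjoint_compl_right) (hC.1.inter hV.compl).isOpen.measurableSet,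
        Set.inter_union_compl]
    calc c F₁ + c F₂ ≤ lam (C ∩ V) + lam (C ∩ Vᶜ) := add_le_add h1 h2
      _ = lam C := h3
  set 𝒞 : MeasureTheory.Content X :=
    { toFun := fun F => (c F).toNNReal
      mono' := fun F₁ F₂ h => ENNReal.toNNReal_mono (hc_ne_top F₂) (hc_mono F₁ F₂ h)
      sup_disjoint' := fun F₁ F₂ hd _ _ => by
        have heq : c (F₁ ⊔ F₂) = c F₁ + c F₂ :=
          le_antisymm (hc_sup_le F₁ F₂) (hc_sup_disjoint F₁ F₂ hd)
        simp only [heq, ENNReal.toNNReal_add (hc_ne_top F₁) (hc_ne_top F₂)]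
      sup_le' := fun F₁ F₂ => by
        have h := ENNReal.toNNReal_mono (ENNReal.add_ne_top.2 ⟨hc_ne_top F₁, hc_ne_top F₂⟩)
          (hc_sup_le F₁ F₂)
        rwa [ENNReal.toNNReal_add (hc_ne_top F₁) (hc_ne_top F₂)] at h } with h𝒞def
  have h𝒞app : ∀ F : TopologicalSpace.Compacts X, (𝒞 F : ℝ≥0∞) = c F := fun F =>
    ENNReal.coe_toNNReal (hc_ne_top F)
  set μ : Measure X := 𝒞.measure with hμdef
  have hμclopen : ∀ C : Set X, IsClopen C → μ C = lam C := by
    intro C hCl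
    have hcp : IsCompact C := hCl.isClosed.isCompact
    have h1 : μ C = 𝒞.innerContent ⟨C, hCl.isOpen⟩ := by
      rw [hμdef, 𝒞.measure_apply hCl.isOpen.measurableSet]
      exact 𝒞.outerMeasure_opens ⟨C, hCl.isOpen⟩
    rw [h1]
    refine le_antisymm ?_ ?_
    · calc 𝒞.innerContent ⟨C, hCl.isOpen⟩ ≤ 𝒞 ⟨C, hcp⟩ :=
          𝒞.innerContent_le ⟨C, hCl.isOpen⟩ ⟨C, hcp⟩ subset_rfl
        _ = c ⟨C, hcp⟩ := h𝒞app _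
        _ = lam C := hc_clopen C hCl hcp
    · calc lam C = (𝒞 ⟨C, hcp⟩ : ℝ≥0∞) := ((h𝒞app _).trans (hc_clopen C hCl hcp)).symm
        _ ≤ _ := 𝒞.le_innerContent ⟨C, hcp⟩ ⟨C, hCl.isOpen⟩ subset_rfl
  haveI hμprob : IsProbabilityMeasure μ := ⟨by
    rw [hμclopen Set.univ isClopen_univ, hlam_univ]⟩
  have hgen : ‹MeasurableSpace X› = MeasurableSpace.generateFrom {C : Set X | IsClopen C} := by
    rw [BorelSpace.measurable_eq (α := X)]
    exact isTopologicalBasis_isClopen.borel_eq_generateFrom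
  have hμmem : μ ∈ InvProbMeasures Γ := by
    refine ⟨hμprob, fun γ hγ => ?_⟩
    haveI : IsProbabilityMeasure (Measure.map (γ : X → X) μ) :=
      Measure.isProbabilityMeasure_map (γ : X ≃ₜ X).continuous.measurable.aemeasurable
    refine MeasureTheory.ext_of_generate_finite {C : Set X | IsClopen C} hgen
      (fun A hA B hB _ => hA.inter hB) (fun A hA => ?_) (by simp [measure_univ])
    rw [Measure.map_apply (γ : X ≃ₜ X).continuous.measurable hA.isOpen.measurableSet,
      hμclopen _ (hA.preimage (γ : X ≃ₜ X).continuous), hμclopen A hA,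
      hlam_inv γ hγ A hA.isOpen.measurableSet]
  have hμK : μ K = 0 := hthin μ hμmem
  have htend : Tendsto (fun n => μ (U n)) Filter.atTop (𝓝 (μ (⋂ n, U n))) :=
    tendsto_measure_iInter_atTop
      (fun n => ((hUclopen n).isOpen.measurableSet).nullMeasurableSet) hUanti
      ⟨0, measure_ne_top μ _⟩
  have hfin : ε ≤ μ (⋂ n, U n) :=
    ge_of_tendsto htend (Eventually.of_forall fun n => by
      rw [hμclopen _ (hUclopen n)]; exact hlam_eps n)
  rw [hUK, hμK] at hfin
  exact hε.not_ge hfin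
end

section
/- Let Γ be an ample group over the Cantor space X acting minimally, let K ⊆ X be Γ-étale, and let γ ∈ Γ be an involution (γ ∘ γ = id). Then the set K_1 = {x ∈ K : γ(x) ∈ K} is clopen in K, γ(K_1) = K_1, and the map γ_K : K → K defined by γ_K(x) = γ(x) if γ(x) ∈ K and γ_K(x) = x otherwise is a homeomorphism of K satisfying γ_K ∘ γ_K = id. -/
open MeasureTheory Set

/-- the induced map `γ_K` of an involution `γ` on a `Γ`-étale set. -/
theorem inducedMap_homeomorph {X : Type*} [TopologicalSpace X]
    (hX : IsCantorSpace X) (Γ : Subgroup (X ≃ₜ X)) (hample : IsAmpleGroup Γ)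
    (hmin : IsMinimalGroup Γ) (K : Set X) (hK : IsEtale Γ K)
    (γ : X ≃ₜ X) (hγ : γ ∈ Γ) (hinv : γ * γ = 1) :
    IsClopenIn K {x : X | x ∈ K ∧ γ x ∈ K} ∧
    γ '' {x : X | x ∈ K ∧ γ x ∈ K} = {x : X | x ∈ K ∧ γ x ∈ K} ∧
    ∃ f : (K : Set X) ≃ₜ (K : Set X),
      (∀ x : K, f x = inducedMap γ K x) ∧ (∀ x : K, f (f x) = x) := by
  have hgg : ∀ x : X, γ (γ x) = x := by
    intro x
    have := congrArg (fun h : X ≃ₜ X => h x) hinv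
    simpa using this
  classical
  -- K₁ = γ '' K ∩ K
  have hKK : IsClopenIn K ((γ : X ≃ₜ X) '' K ∩ K) := by
    refine hK.2 γ hγ K ⟨Set.Subset.rfl, ?_⟩
    have : (Subtype.val ⁻¹' K : Set K) = Set.univ := by
      ext x; simp [x.2]
    rw [this]; exact isClopen_univ
  have hset : (γ : X ≃ₜ X) '' K ∩ K = {x : X | x ∈ K ∧ γ x ∈ K} := by
    ext x
    constructor
    · rintro ⟨⟨y, hy, rfl⟩, hx⟩
      exact ⟨hx, by rwa [hgg]⟩
    · rintro ⟨hx, hgx⟩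
      exact ⟨⟨γ x, hgx, hgg x⟩, hx⟩
  rw [hset] at hKK
  refine ⟨hKK, ?_, ?_⟩
  · ext x
    constructor
    · rintro ⟨y, ⟨hy, hgy⟩, rfl⟩
      exact ⟨hgy, by rwa [hgg]⟩
    · rintro ⟨hx, hgx⟩
      exact ⟨γ x, ⟨hgx, by rwa [hgg]⟩, hgg x⟩
  · -- construct the homeomorphism
    set u : K → X := fun x => if γ (x : X) ∈ K then γ (x : X) else (x : X) with hu_def
    have hu : ∀ x : K, u x ∈ K := by
      intro x
      by_cases h : γ (x : X) ∈ K
      · simpa [hu_def, h] using h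
      · simpa [hu_def, h] using x.2
    set f : K → K := fun x => ⟨u x, hu x⟩ with hf_def
    have hfeq : ∀ x : K, f x = inducedMap γ K x := by
      intro x
      by_cases h : γ (x : X) ∈ K <;>
        simp [hf_def, hu_def, inducedMap, h]
    have hclopen : IsClopen {x : K | γ (x : X) ∈ K} := by
      have := hKK.2
      have heq : (Subtype.val ⁻¹' {x : X | x ∈ K ∧ γ x ∈ K} : Set K)
          = {x : K | γ (x : X) ∈ K} := by
        ext x; simp [x.2]
      rwa [heq] at this
    have hucont : Continuous u := by
      refine Continuous.if ?_ ?_ ?_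
      · intro a ha
        rw [hclopen.frontier_eq] at ha
        exact absurd ha (Set.notMem_empty a)
      · exact γ.continuous.comp continuous_subtype_val
      · exact continuous_subtype_val
    have hfcont : Continuous f := hucont.subtype_mk hu
    have hff : ∀ x : K, f (f x) = x := by
      intro x
      by_cases h : γ (x : X) ∈ K
      · have h1 : f x = ⟨γ (x : X), h⟩ := by
          simp [hf_def, hu_def, h]
        have h2 : γ (γ (x : X)) ∈ K := by rw [hgg]; exact x.2
        apply Subtype.ext
        rw [h1]
        simp only [hf_def, hu_def]
        simp [h2, hgg]
      · have h1 : f x = x := by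
          apply Subtype.ext; simp [hf_def, hu_def, h]
        rw [h1, h1]
    have hinvol : Function.Involutive f := hff
    refine ⟨⟨hinvol.toPerm, hfcont, hfcont⟩, hfeq, ?_⟩
    intro x
    exact hff x
end

section
/- Let Γ be an ample group over the Cantor space X acting minimally, let K ⊆ X be Γ-étale, and let γ ∈ Γ be an involution. Then there exists an involution δ ∈ Γ such that δ(K) = K and δ_K = γ_K, i.e. for every x ∈ K, δ_K(x) = γ_K(x). -/
open MeasureTheory Set

/-- In a compact Hausdorff totally disconnected space, a compact set disjoint from a
closed set can be separated from it by a clopen set. -/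
lemma exists_isClopen_separating {Y : Type*} [TopologicalSpace Y] [CompactSpace Y] [T2Space Y]
    [TotallyDisconnectedSpace Y] {L M : Set Y} (hL : IsCompact L) (hM : IsClosed M)
    (hd : Disjoint L M) : ∃ V : Set Y, IsClopen V ∧ L ⊆ V ∧ Disjoint V M := by
  classical
  have hopen : IsOpen Mᶜ := hM.isOpen_compl
  have hcov : ∀ x : L, ∃ V : Set Y, IsClopen V ∧ (x : Y) ∈ V ∧ V ⊆ Mᶜ := fun x =>
    compact_exists_isClopen_in_isOpen hopen (Set.disjoint_left.mp hd x.2)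
  choose V hVc hVx hVs using hcov
  obtain ⟨t, ht⟩ := hL.elim_finite_subcover V (fun x => (hVc x).2)
    (fun x hx => Set.mem_iUnion.mpr ⟨⟨x, hx⟩, hVx ⟨x, hx⟩⟩)
  refine ⟨⋃ x ∈ t, V x, isClopen_biUnion_finset fun x _ => hVc x, ?_, ?_⟩
  · intro x hx
    exact ht hx
  · rw [Set.disjoint_left]
    intro y hy hyM
    obtain ⟨x, -, hxV⟩ := Set.mem_iUnion₂.mp hy
    exact hVs x hxV hyM

/-- every involution of `Γ` induces the same map on a `Γ`-étale set
as some `K`-compatible involution of `Γ`. -/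
theorem exists_compatible_involution {X : Type*} [TopologicalSpace X]
    (hX : IsCantorSpace X) (Γ : Subgroup (X ≃ₜ X)) (hample : IsAmpleGroup Γ)
    (hmin : IsMinimalGroup Γ) (K : Set X) (hK : IsEtale Γ K)
    (γ : X ≃ₜ X) (hγ : γ ∈ Γ) (hinv : γ * γ = 1) :
    ∃ δ : X ≃ₜ X, δ ∈ Γ ∧ δ * δ = 1 ∧ δ '' K = K ∧
      ∀ x : K, inducedMap δ K x = inducedMap γ K x := by
  classical
  obtain ⟨hne, hcomp, hmet, htd, -⟩ := hX
  haveI := hcomp; haveI := hmet; haveI := htd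
  have hγγ : ∀ x : X, γ (γ x) = x := fun x => Homeomorph.ext_iff.mp hinv x
  have hKclosed : IsClosed K := hK.1
  -- the set L of points of K sent into K by γ
  set L : Set X := (γ : X ≃ₜ X) '' K ∩ K with hLdef
  have hclopenK : IsClopenIn K K := by
    refine ⟨subset_rfl, ?_⟩
    have : (Subtype.val ⁻¹' K : Set K) = Set.univ := by
      ext x; simpa using x.2
    rw [this]; exact isClopen_univ
  have hLclopenIn : IsClopenIn K L := hK.2 γ hγ K hclopenK
  have hLK : L ⊆ K := Set.inter_subset_right
  have hLγ : ∀ x ∈ L, γ x ∈ L := by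
    rintro x ⟨⟨k, hk, rfl⟩, hxK⟩
    exact ⟨⟨γ k, hxK, rfl⟩, by rw [hγγ k]; exact hk⟩
  have hcemb : Topology.IsClosedEmbedding (Subtype.val : K → X) :=
    hKclosed.isClosedEmbedding_subtypeVal
  have hLclosed : IsClosed L := by
    have h1 : IsClosed (Subtype.val '' (Subtype.val ⁻¹' L : Set K)) :=
      hcemb.isClosed_iff_image_isClosed.1 hLclopenIn.2.1
    rwa [Subtype.image_preimage_coe, Set.inter_eq_right.mpr hLK] at h1
  have hKLclosed : IsClosed (K \ L) := by
    have h1 : IsClosed (Subtype.val '' ((Subtype.val ⁻¹' L : Set K)ᶜ)) :=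
      hcemb.isClosed_iff_image_isClosed.1 hLclopenIn.2.compl.1
    have h2 : Subtype.val '' ((Subtype.val ⁻¹' L : Set K)ᶜ) = K \ L := by
      ext x
      simp only [Set.mem_image, Set.mem_compl_iff, Set.mem_preimage, Set.mem_diff]
      constructor
      · rintro ⟨⟨y, hy⟩, hyL, rfl⟩; exact ⟨hy, hyL⟩
      · rintro ⟨hxK, hxL⟩; exact ⟨⟨x, hxK⟩, hxL, rfl⟩
    rwa [h2] at h1
  obtain ⟨V, hVclopen, hLV, hVd⟩ := exists_isClopen_separating hLclosed.isCompact hKLclosed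
    (Set.disjoint_left.mpr fun x hx hx' => hx'.2 hx)
  -- the clopen set W on which δ will agree with γ
  set W : Set X := V ∩ (γ : X ≃ₜ X) ⁻¹' V with hWdef
  have hWclopen : IsClopen W := hVclopen.inter (hVclopen.preimage γ.continuous)
  have hVK : V ∩ K ⊆ L := by
    intro x ⟨hxV, hxK⟩
    by_contra hxL
    exact Set.disjoint_left.mp hVd hxV ⟨hxK, hxL⟩
  have hLW : L ⊆ W := fun x hx => ⟨hLV hx, hLV (hLγ x hx)⟩
  have hWK : W ∩ K = L := by
    apply Set.Subset.antisymm
    · intro x ⟨hxW, hxK⟩; exact hVK ⟨hxW.1, hxK⟩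
    · intro x hx; exact ⟨hLW hx, hLK hx⟩
  have hWγ : ∀ x, x ∈ W ↔ γ x ∈ W := by
    intro x
    simp only [hWdef, Set.mem_inter_iff, Set.mem_preimage, hγγ x]
    tauto
  -- build δ
  set f : X → X := W.piecewise (⇑γ) id with hfdef
  have hfW : ∀ x ∈ W, f x = γ x := fun x hx => Set.piecewise_eq_of_mem _ _ _ hx
  have hfW' : ∀ x ∉ W, f x = x := fun x hx => Set.piecewise_eq_of_notMem _ _ _ hx
  have hff : ∀ x, f (f x) = x := by
    intro x
    by_cases hx : x ∈ W
    · rw [hfW x hx, hfW _ ((hWγ x).1 hx), hγγ]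
    · rw [hfW' x hx, hfW' x hx]
  have hfc : Continuous f :=
    Continuous.piecewise (by simp [hWclopen.frontier_eq]) γ.continuous continuous_id
  set δ : X ≃ₜ X := ⟨⟨f, f, hff, hff⟩, hfc, hfc⟩ with hδdef
  have hδapp : ∀ x, δ x = f x := fun _ => rfl
  have hδK' : ∀ x ∈ K, δ x ∈ K := by
    intro x hx
    by_cases hxW : x ∈ W
    · rw [hδapp, hfW x hxW]
      exact hLK (hLγ x (hWK ▸ ⟨hxW, hx⟩))
    · rw [hδapp, hfW' x hxW]; exact hx
  refine ⟨δ, ?_, ?_, ?_, ?_⟩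
  · -- δ ∈ Γ
    apply hample.2.2.1
    refine ⟨2, ![W, Wᶜ], ![γ, 1], ?_, ?_, ?_, ?_, ?_⟩
    · intro i; fin_cases i
      · exact hWclopen
      · exact hWclopen.compl
    · intro i; fin_cases i
      · exact hγ
      · exact one_mem Γ
    · intro i j hij
      fin_cases i <;> fin_cases j <;>
        first
          | exact absurd rfl hij
          | exact disjoint_compl_right
          | exact disjoint_compl_left
    · apply Set.eq_univ_of_forall
      intro x
      by_cases hx : x ∈ W
      · exact Set.mem_iUnion.mpr ⟨0, hx⟩
      · exact Set.mem_iUnion.mpr ⟨1, hx⟩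
    · intro i; fin_cases i
      · intro x hx; exact hfW x hx
      · intro x hx; rw [hδapp, hfW' x hx]; rfl
  · -- δ * δ = 1
    ext x
    exact hff x
  · -- δ '' K = K
    apply Set.Subset.antisymm
    · rintro y ⟨x, hx, rfl⟩; exact hδK' x hx
    · intro x hx; exact ⟨δ x, hδK' x hx, hff x⟩
  · -- δ_K = γ_K
    rintro ⟨x₀, hx₀⟩
    by_cases h : γ x₀ ∈ K
    · have hxL : x₀ ∈ L := ⟨⟨γ x₀, h, hγγ x₀⟩, hx₀⟩
      have hδx : δ x₀ = γ x₀ := hfW x₀ (hLW hxL)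
      have h' : δ x₀ ∈ K := by rw [hδx]; exact h
      simp only [inducedMap, dif_pos h', dif_pos h]
      exact Subtype.ext hδx
    · have hxW : x₀ ∉ W := fun hW => h (hLK (hLγ x₀ (hWK ▸ ⟨hW, hx₀⟩)))
      have hδx : δ x₀ = x₀ := hfW' x₀ hxW
      have h' : δ x₀ ∈ K := by rw [hδx]; exact hx₀
      simp only [inducedMap, dif_pos h', dif_neg h]
      exact Subtype.ext hδx
end

section
/- Let Γ be an ample group over the Cantor space X acting minimally, let K ⊆ X be Γ-étale, and let (𝒜, Δ) be a finite unit system with Δ ≤ Γ. Then there exist a finite unit system (𝒜', Δ') which is K-compatible, with 𝒜' ⊇ 𝒜 and Δ ≤ Δ' ≤ Γ. -/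
open MeasureTheory Set

/-!
Since `Δ` acts faithfully on the finite algebra `𝒜`, it is finite. For `δ ∈ Δ`, étaleness makes
`K ∩ δ⁻¹ K` clopen in `K`, so the compact set `K \ δ⁻¹ K` has a clopen neighbourhood `Q_δ`
disjoint from `δ⁻¹ K`. Let `G` be the finite family of `Δ`-translates of the members of `𝒜` and
of the sets `Q_δ`, let `𝒜'` be the Boolean algebra generated by `G`, whose atoms are the cells
`{y | ∀ S ∈ G, y ∈ S ↔ x ∈ S}`, and let `Δ'` consist of the homeomorphisms agreeing on each cell
with an element of `Δ`. An atom `A` meeting `K` with `δ A` meeting `K` cannot lie inside `Q_δ`,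
as `δ Q_δ` misses `K`; so it lies outside `Q_δ`, whence `δ (K ∩ A) ⊆ K`. The same argument for
`δ⁻¹` gives `δ (K ∩ A) = K ∩ δ A`. Finally `Δ'` still acts faithfully on `𝒜'`, because already
`𝒜` separates every point moved by some `δ ∈ Δ` from its image.
-/

namespace Homeomorph

variable {X : Type*} [TopologicalSpace X]

theorem image_mul (f g : X ≃ₜ X) (s : Set X) : ⇑(f * g) '' s = f '' (g '' s) :=
  (image_image f g s).symm

theorem image_inv (f : X ≃ₜ X) (s : Set X) : ⇑f⁻¹ '' s = f ⁻¹' s :=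
  congrFun f.image_symm s

open scoped Classical in
noncomputable def piecewiseRefl (δ : X ≃ₜ X) {A : Set X} (hA : IsClopen A) (hδA : δ '' A = A) :
    X ≃ₜ X where
  toFun := A.piecewise δ id
  invFun := A.piecewise δ.symm id
  left_inv x := by
    by_cases hx : x ∈ A
    · have : δ x ∈ A := hδA ▸ mem_image_of_mem δ hx
      simp [hx, this]
    · simp [hx]
  right_inv x := by
    by_cases hx : x ∈ A
    · have : δ.symm x ∈ A := by
        rw [← hδA] at hx
        obtain ⟨y, hy, rfl⟩ := hx
        simpa using hy
      simp [hx, this]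
    · simp [hx]
  continuous_toFun := δ.continuous.piecewise (by simp [hA.frontier_eq]) continuous_id
  continuous_invFun := δ.symm.continuous.piecewise (by simp [hA.frontier_eq]) continuous_id

theorem eqOn_piecewiseRefl (δ : X ≃ₜ X) {A : Set X} (hA : IsClopen A) (hδA : δ '' A = A) :
    EqOn (δ.piecewiseRefl hA hδA) δ A := by
  classical
  exact A.piecewise_eqOn _ _

theorem eqOn_compl_piecewiseRefl (δ : X ≃ₜ X) {A : Set X} (hA : IsClopen A) (hδA : δ '' A = A) :
    EqOn (δ.piecewiseRefl hA hδA) id Aᶜ := by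
  classical
  exact A.piecewise_eqOn_compl _ _

end Homeomorph

theorem piecewiseIn_of_finite {Y : Type*} [TopologicalSpace Y] {Γ : Subgroup (Y ≃ₜ Y)}
    {ι : Type*} [Finite ι] {g : Y ≃ₜ Y} (U : ι → Set Y) (γ : ι → Y ≃ₜ Y)
    (hU : ∀ i, IsClopen (U i)) (hγ : ∀ i, γ i ∈ Γ) (hdisj : Pairwise (Function.onFun Disjoint U))
    (hcover : ⋃ i, U i = univ) (hg : ∀ i, EqOn g (γ i) (U i)) : PiecewiseIn Γ g :=
  let e := Finite.equivFin ι
  ⟨Nat.card ι, U ∘ e.symm, γ ∘ e.symm, fun _ => hU _, fun _ => hγ _,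
    hdisj.comp_of_injective e.symm.injective, (e.symm.surjective.iUnion_comp U).trans hcover,
    fun _ _ hx => hg _ hx⟩

namespace IsUnitSystem

variable {X : Type*} [TopologicalSpace X] {𝒜 : Set (Set X)} {Δ : Subgroup (X ≃ₜ X)}

theorem finite_subgroup (hus : IsUnitSystem 𝒜 Δ) (hfin : 𝒜.Finite) :
    (Δ : Set (X ≃ₜ X)).Finite := by
  have : Finite 𝒜 := hfin.to_subtype
  let act : Δ → 𝒜 → 𝒜 := fun δ A => ⟨δ.1 '' A, hus.maps δ δ.2 A A.2⟩
  refine Set.finite_coe_iff.mp (Finite.of_injective act fun δ₁ δ₂ h => ?_)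
  have hδ : δ₂.1⁻¹ * δ₁.1 = 1 := by
    refine hus.eval_injective _ (mul_mem (inv_mem δ₂.2) δ₁.2) fun A hA => ?_
    have h' : δ₁.1 '' A = δ₂.1 '' A := congrArg Subtype.val (congrFun h ⟨A, hA⟩)
    rw [Homeomorph.image_mul, h', ← Homeomorph.image_mul, inv_mul_cancel]
    exact image_id A
  exact Subtype.ext (inv_mul_eq_one.mp hδ).symm

theorem mem_of_eqOn_of_eqOn_compl (hus : IsUnitSystem 𝒜 Δ) {A : Set X} (hA : A ∈ 𝒜)
    {g δ₁ δ₂ : X ≃ₜ X} (hδ₁ : δ₁ ∈ Δ) (hδ₂ : δ₂ ∈ Δ) (h₁ : EqOn g δ₁ A) (h₂ : EqOn g δ₂ Aᶜ) :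
    g ∈ Δ := by
  refine hus.full g ⟨2, ![A, Aᶜ], ![δ₁, δ₂], ?_, ?_, ?_, ?_, ?_⟩
  · simp [Fin.forall_fin_two, hA, hus.compl_mem A hA]
  · simp [Fin.forall_fin_two, hδ₁, hδ₂]
  · intro i j hij
    fin_cases i <;> fin_cases j <;>
      simp_all [Function.onFun, disjoint_compl_left, disjoint_compl_right]
  · simp [iUnion_eq_univ_iff, Fin.exists_fin_two, em]
  · simpa [Fin.forall_fin_two] using ⟨h₁, h₂⟩

/-- Otherwise `δ` on `A` and the identity off `A` would glue to a nontrivial element of `Δ`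
fixing every member of `𝒜`. -/
theorem apply_eq_self_of_image_eq (hus : IsUnitSystem 𝒜 Δ) {A : Set X} (hA : IsAtomOf 𝒜 A)
    {δ : X ≃ₜ X} (hδ : δ ∈ Δ) (hδA : δ '' A = A) {x : X} (hx : x ∈ A) : δ x = x := by
  set g := δ.piecewiseRefl (hus.clopen A hA.1) hδA
  have hgA : EqOn g δ A := δ.eqOn_piecewiseRefl _ hδA
  have hgAc : EqOn g id Aᶜ := δ.eqOn_compl_piecewiseRefl _ hδA
  have hg : g ∈ Δ := hus.mem_of_eqOn_of_eqOn_compl hA.1 hδ (one_mem Δ) hgA hgAc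
  have hg1 : g = 1 := hus.eval_injective g hg fun B hB => by
    rcases hA.2.2 (B ∩ A) (hus.inter_mem B hB A hA.1) inter_subset_right with h | h
    · rw [image_congr fun y hy => hgAc (fun hyA => h.subset ⟨hy, hyA⟩), image_id]
    · rw [← inter_union_sdiff B A, image_union, h, image_congr hgA, hδA,
        image_congr fun y hy => hgAc hy.2, image_id]
  rw [← hgA hx, hg1]
  rfl

theorem exists_isAtomOf_mem (hus : IsUnitSystem 𝒜 Δ) (hfin : 𝒜.Finite) (x : X) :
    ∃ A, IsAtomOf 𝒜 A ∧ x ∈ A := by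
  obtain ⟨A, ⟨hA, hxA⟩, hmin⟩ := (hfin.sep (x ∈ ·)).exists_minimal
    ⟨univ, by simpa using hus.compl_mem ∅ hus.empty_mem, mem_univ x⟩
  refine ⟨A, ⟨hA, (nonempty_of_mem hxA).ne_empty, fun B hB hBA => ?_⟩, hxA⟩
  by_cases hxB : x ∈ B
  · exact Or.inr (hBA.antisymm (hmin ⟨hB, hxB⟩ hBA))
  · left
    have hAB := hmin ⟨hus.inter_mem A hA _ (hus.compl_mem B hB), hxA, hxB⟩ inter_subset_left
    exact subset_eq_empty (fun y hy => (hAB (hBA hy)).2 hy) rfl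

theorem isAtomOf_image (hus : IsUnitSystem 𝒜 Δ) {A : Set X} (hA : IsAtomOf 𝒜 A) {δ : X ≃ₜ X}
    (hδ : δ ∈ Δ) : IsAtomOf 𝒜 (δ '' A) := by
  refine ⟨hus.maps δ hδ A hA.1, by simpa using hA.2.1, fun B hB hBA => ?_⟩
  have hB' : (δ⁻¹ : X ≃ₜ X) '' B ∈ 𝒜 := hus.maps _ (inv_mem hδ) B hB
  have hBA' : (δ⁻¹ : X ≃ₜ X) '' B ⊆ A := by
    rintro _ ⟨z, hz, rfl⟩
    obtain ⟨w, hw, rfl⟩ := hBA hz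
    simpa using hw
  rcases hA.2.2 _ hB' hBA' with h | h
  · exact Or.inl (image_eq_empty.mp h)
  · right
    rw [← h]
    ext; simp

theorem exists_mem_of_apply_ne (hus : IsUnitSystem 𝒜 Δ) (hfin : 𝒜.Finite) {δ : X ≃ₜ X}
    (hδ : δ ∈ Δ) {x : X} (hx : δ x ≠ x) : ∃ S ∈ 𝒜, x ∈ S ∧ δ x ∉ S := by
  obtain ⟨A, hA, hxA⟩ := hus.exists_isAtomOf_mem hfin x
  refine ⟨A, hA.1, hxA, fun hδxA => hx (hus.apply_eq_self_of_image_eq hA hδ ?_ hxA)⟩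
  have hAδA : A ∩ δ '' A ∈ 𝒜 := hus.inter_mem _ hA.1 _ (hus.maps δ hδ A hA.1)
  have hne : A ∩ δ '' A ≠ ∅ := (nonempty_of_mem
    (show δ x ∈ A ∩ δ '' A from ⟨hδxA, mem_image_of_mem δ hxA⟩)).ne_empty
  exact (((hus.isAtomOf_image hA hδ).2.2 _ hAδA inter_subset_right).resolve_left hne).symm.trans
    ((hA.2.2 _ hAδA inter_subset_left).resolve_left hne)

end IsUnitSystem

section Cells

variable {X : Type*} (G : Set (Set X))

/-- The cells of `G` are the fibres of `cellCode G`, and the Boolean algebra generated by `G`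
consists of the preimages of sets of codes. -/
noncomputable def cellCode (x : X) : G → Bool := fun S => (S : Set X).boolIndicator x

def cell (x : X) : Set X := cellCode G ⁻¹' {cellCode G x}

def cellAlg : Set (Set X) := range (preimage (cellCode G))

variable {G} {x y : X} {A : Set X}

theorem mem_cell_iff : y ∈ cell G x ↔ ∀ S ∈ G, (y ∈ S ↔ x ∈ S) := by
  simp only [cell, cellCode, mem_preimage, mem_singleton_iff, funext_iff, Subtype.forall]
  exact forall₂_congr fun S _ => by
    rw [Bool.eq_iff_iff, ← mem_iff_boolIndicator, ← mem_iff_boolIndicator]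

theorem mem_cell_self (x : X) : x ∈ cell G x := mem_singleton _

theorem cell_mem_cellAlg (x : X) : cell G x ∈ cellAlg G := ⟨_, rfl⟩

theorem mem_cellAlg_iff : A ∈ cellAlg G ↔ ∀ x y, y ∈ cell G x → x ∈ A → y ∈ A := by
  constructor
  · rintro ⟨T, rfl⟩ x y hy hx
    rwa [mem_preimage, show cellCode G y = cellCode G x from hy]
  · exact fun h => ⟨cellCode G '' A, subset_antisymm (fun y ⟨x, hx, hxy⟩ => h x y hxy.symm hx)
      (subset_preimage_image _ _)⟩

theorem cell_subset_of_mem (hA : A ∈ cellAlg G) (hx : x ∈ A) : cell G x ⊆ A :=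
  fun y hy => mem_cellAlg_iff.1 hA x y hy hx

theorem subset_cellAlg : G ⊆ cellAlg G :=
  fun S hS => mem_cellAlg_iff.2 fun _ _ hy hx => (mem_cell_iff.1 hy S hS).2 hx

theorem empty_mem_cellAlg : ∅ ∈ cellAlg G := ⟨∅, preimage_empty⟩

theorem compl_mem_cellAlg (hA : A ∈ cellAlg G) : Aᶜ ∈ cellAlg G := by
  obtain ⟨T, rfl⟩ := hA
  exact ⟨Tᶜ, preimage_compl⟩

theorem inter_mem_cellAlg {B : Set X} (hA : A ∈ cellAlg G) (hB : B ∈ cellAlg G) :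
    A ∩ B ∈ cellAlg G := by
  obtain ⟨T, rfl⟩ := hA
  obtain ⟨T', rfl⟩ := hB
  exact ⟨T ∩ T', preimage_inter⟩

theorem cellAlg_finite (hG : G.Finite) : (cellAlg G).Finite :=
  have := hG.to_subtype
  finite_range _

theorem eq_cell_of_isAtomOf (hA : IsAtomOf (cellAlg G) A) (hx : x ∈ A) : A = cell G x :=
  ((hA.2.2 _ (cell_mem_cellAlg x) (cell_subset_of_mem hA.1 hx)).resolve_left
    (nonempty_of_mem (mem_cell_self x)).ne_empty).symm

theorem cell_subset_or_disjoint (hA : A ∈ cellAlg G) (x : X) :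
    cell G x ⊆ A ∨ Disjoint (cell G x) A := by
  by_cases hx : x ∈ A
  · exact Or.inl (cell_subset_of_mem hA hx)
  · exact Or.inr (subset_compl_iff_disjoint_right.1 (cell_subset_of_mem (compl_mem_cellAlg hA) hx))

end Cells

section PieceGroup

variable {X : Type*} [TopologicalSpace X] {Δ : Subgroup (X ≃ₜ X)} {G : Set (Set X)}

theorem isClopen_of_mem_cellAlg (hG : G.Finite) (hGcl : ∀ S ∈ G, IsClopen S) {A : Set X}
    (hA : A ∈ cellAlg G) : IsClopen A := by
  have := hG.to_subtype
  obtain ⟨T, rfl⟩ := hA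
  exact (isClopen_discrete T).preimage
    (continuous_pi fun S => (continuous_boolIndicator_iff_isClopen _).2 (hGcl S S.2))

theorem image_cell (hGinv : ∀ δ ∈ Δ, ∀ S ∈ G, (δ : X ≃ₜ X) '' S ∈ G) {δ : X ≃ₜ X} (hδ : δ ∈ Δ)
    (x : X) : δ '' cell G x = cell G (δ x) := by
  ext y
  rw [← δ.preimage_symm, mem_preimage, mem_cell_iff, mem_cell_iff]
  constructor
  · intro h S hS
    simpa [Homeomorph.image_symm] using h _ (hGinv _ (inv_mem hδ) S hS)
  · intro h S hS
    simpa [Homeomorph.image_eq_preimage_symm] using h _ (hGinv δ hδ S hS)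

def pieceGroup (Δ : Subgroup (X ≃ₜ X)) (G : Set (Set X))
    (hGinv : ∀ δ ∈ Δ, ∀ S ∈ G, (δ : X ≃ₜ X) '' S ∈ G) : Subgroup (X ≃ₜ X) where
  carrier := {g | ∀ x, ∃ δ ∈ Δ, EqOn g δ (cell G x)}
  one_mem' _ := ⟨1, one_mem Δ, eqOn_refl _ _⟩
  mul_mem' := by
    rintro g h hg hh x
    obtain ⟨δ, hδ, hhδ⟩ := hh x
    obtain ⟨δ', hδ', hgδ'⟩ := hg (δ x)
    refine ⟨δ' * δ, mul_mem hδ' hδ, fun y hy => ?_⟩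
    have hhy : h y ∈ cell G (δ x) := by
      rw [hhδ hy, ← image_cell hGinv hδ]
      exact mem_image_of_mem δ hy
    rw [Homeomorph.mul_apply, Homeomorph.mul_apply, ← hhδ hy]
    exact hgδ' hhy
  inv_mem' := by
    rintro g hg x
    obtain ⟨δ, hδ, hgδ⟩ := hg (g.symm x)
    refine ⟨δ⁻¹, inv_mem hδ, fun y hy => ?_⟩
    have hx : δ (g.symm x) = x := by rw [← hgδ (mem_cell_self _), g.apply_symm_apply]
    rw [← hx, ← image_cell hGinv hδ] at hy
    obtain ⟨z, hz, rfl⟩ := hy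
    rw [Homeomorph.inv_apply, Homeomorph.inv_apply, δ.symm_apply_apply, ← hgδ hz,
      g.symm_apply_apply]

variable (hGinv : ∀ δ ∈ Δ, ∀ S ∈ G, (δ : X ≃ₜ X) '' S ∈ G)

theorem le_pieceGroup : Δ ≤ pieceGroup Δ G hGinv := fun δ hδ _ => ⟨δ, hδ, eqOn_refl _ _⟩

theorem pieceGroup_le {Γ : Subgroup (X ≃ₜ X)} (hΓ : IsFullGroup Γ) (hΔΓ : Δ ≤ Γ)
    (hGfin : G.Finite) (hGcl : ∀ S ∈ G, IsClopen S) : pieceGroup Δ G hGinv ≤ Γ := by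
  intro g hg
  have := hGfin.to_subtype
  have hpiece : ∀ b : G → Bool, ∃ γ ∈ Γ, EqOn g γ (cellCode G ⁻¹' {b}) := by
    intro b
    rcases (cellCode G ⁻¹' {b}).eq_empty_or_nonempty with h | ⟨x, hx⟩
    · exact ⟨1, one_mem Γ, h ▸ eqOn_empty _ _⟩
    · obtain ⟨δ, hδ, hgδ⟩ := hg x
      rw [mem_preimage, mem_singleton_iff] at hx
      exact ⟨δ, hΔΓ hδ, hx ▸ hgδ⟩
  choose γ hγ hgγ using hpiece
  exact hΓ g (piecewiseIn_of_finite _ γ (fun _ => isClopen_of_mem_cellAlg hGfin hGcl ⟨_, rfl⟩) hγ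
    (fun _ _ h => (disjoint_singleton.2 h).preimage _)
    (eq_univ_of_forall fun x => mem_iUnion.2 ⟨_, rfl⟩) hgγ)

theorem IsUnitSystem.cellAlg_pieceGroup {𝒜 : Set (Set X)} (hus : IsUnitSystem 𝒜 Δ)
    (hfin : 𝒜.Finite) (h𝒜G : 𝒜 ⊆ G) (hGfin : G.Finite) (hGcl : ∀ S ∈ G, IsClopen S) :
    IsUnitSystem (cellAlg G) (pieceGroup Δ G hGinv) where
  clopen _ := isClopen_of_mem_cellAlg hGfin hGcl
  empty_mem := empty_mem_cellAlg
  compl_mem _ := compl_mem_cellAlg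
  inter_mem _ hA _ hB := inter_mem_cellAlg hA hB
  maps g hg A hA := by
    refine mem_cellAlg_iff.2 ?_
    rintro _ y hy ⟨a, ha, rfl⟩
    obtain ⟨δ, hδ, hgδ⟩ := hg a
    rw [hgδ (mem_cell_self a), ← image_cell hGinv hδ] at hy
    obtain ⟨b, hb, rfl⟩ := hy
    exact ⟨b, cell_subset_of_mem hA ha hb, hgδ hb⟩
  eval_injective g hg hfix := by
    ext x
    obtain ⟨δ, hδ, hgδ⟩ := hg x
    have hδx : δ x ∈ g '' cell G x := ⟨x, mem_cell_self x, hgδ (mem_cell_self x)⟩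
    rw [hfix _ (cell_mem_cellAlg x)] at hδx
    rw [hgδ (mem_cell_self x)]
    by_contra hne
    obtain ⟨S, hS, hxS, hδxS⟩ := hus.exists_mem_of_apply_ne hfin hδ hne
    exact hδxS ((mem_cell_iff.1 hδx S (h𝒜G hS)).2 hxS)
  fixed_mem g hg := by
    refine mem_cellAlg_iff.2 fun x y hy hx => ?_
    obtain ⟨δ, hδ, hgδ⟩ := hg x
    have hδx : δ x = x := hgδ (mem_cell_self x) ▸ hx
    change g y = y
    rw [hgδ hy]
    exact (mem_cell_iff.1 hy _ (h𝒜G (hus.fixed_mem δ hδ))).2 hδx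
  full := by
    rintro g ⟨n, U, γ, hU, hγ, -, hcover, hgγ⟩ x
    obtain ⟨i, hxi⟩ := mem_iUnion.1 (hcover ▸ mem_univ x)
    obtain ⟨δ, hδ, hγδ⟩ := hγ i x
    exact ⟨δ, hδ, fun y hy => (hgγ i y (cell_subset_of_mem (hU i) hxi hy)).trans (hγδ hy)⟩

end PieceGroup

theorem inter_subset_preimage_of_separator {α : Type*} {f : α → α} {K A Q : Set α}
    (hKQ : K \ f ⁻¹' K ⊆ Q) (hQ : Disjoint Q (f ⁻¹' K)) (hA : A ⊆ Q ∨ Disjoint A Q)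
    (hfA : (K ∩ f '' A).Nonempty) : K ∩ A ⊆ f ⁻¹' K := by
  rcases hA with hAQ | hAQ
  · obtain ⟨_, hK, a, ha, rfl⟩ := hfA
    exact absurd hK (hQ.notMem_of_mem_left (hAQ ha))
  · exact fun a ⟨haK, haA⟩ => by_contra fun h => hAQ.notMem_of_mem_left haA (hKQ ⟨haK, h⟩)

theorem Equiv.image_inter_eq_of_subset_preimage {α : Type*} (e : α ≃ α) {K A : Set α}
    (h₁ : K ∩ A ⊆ e ⁻¹' K) (h₂ : K ∩ e '' A ⊆ e.symm ⁻¹' K) : e '' (K ∩ A) = K ∩ e '' A := by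
  refine subset_antisymm (image_subset_iff.2 fun a ha => ⟨h₁ ha, mem_image_of_mem e ha.2⟩)
    fun y hy => ⟨e.symm y, ⟨h₂ hy, ?_⟩, e.apply_symm_apply y⟩
  obtain ⟨a, ha, rfl⟩ := hy.2
  simpa using ha

theorem isKCompatible_cellAlg_pieceGroup {X : Type*} [TopologicalSpace X]
    {Δ : Subgroup (X ≃ₜ X)} {G : Set (Set X)} (hGinv : ∀ δ ∈ Δ, ∀ S ∈ G, (δ : X ≃ₜ X) '' S ∈ G)
    {K : Set X} (hsep : ∀ δ ∈ Δ, ∃ Q ∈ G, K \ δ ⁻¹' K ⊆ Q ∧ Disjoint Q (δ ⁻¹' K)) :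
    IsKCompatible K (cellAlg G) (pieceGroup Δ G hGinv) := by
  rintro A _ hA - g hg rfl ⟨x, hxK, hxA⟩ hKB
  obtain rfl := eq_cell_of_isAtomOf hA hxA
  obtain ⟨δ, hδ, hgδ⟩ := hg x
  rw [image_congr hgδ] at hKB ⊢
  rw [image_congr fun y hy => hgδ hy.2]
  obtain ⟨Q, hQG, hKQ, hQ⟩ := hsep δ hδ
  obtain ⟨Q', hQ'G, hKQ', hQ'⟩ := hsep _ (inv_mem hδ)
  refine δ.toEquiv.image_inter_eq_of_subset_preimage
    (inter_subset_preimage_of_separator hKQ hQ (cell_subset_or_disjoint (subset_cellAlg hQG) x) hKB)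
    (inter_subset_preimage_of_separator hKQ' hQ' ?_ ?_)
  · rw [δ.coe_toEquiv, image_cell hGinv hδ]
    exact cell_subset_or_disjoint (subset_cellAlg hQ'G) _
  · exact ⟨x, hxK, by simpa using mem_cell_self x⟩

theorem IsEtale.exists_isClopen_separator {X : Type*} [TopologicalSpace X] [CompactSpace X]
    [T2Space X] [TotallyDisconnectedSpace X] {Γ : Subgroup (X ≃ₜ X)} {K : Set X}
    (hK : IsEtale Γ K) {δ : X ≃ₜ X} (hδ : δ ∈ Γ) :
    ∃ Q, IsClopen Q ∧ K \ δ ⁻¹' K ⊆ Q ∧ Disjoint Q (δ ⁻¹' K) := by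
  have hrel : IsClopenIn K (⇑δ⁻¹ '' K ∩ K) :=
    hK.2 _ (inv_mem hδ) K ⟨subset_rfl, by rw [Subtype.coe_preimage_self]; exact isClopen_univ⟩
  have hclosed : IsClosed (K \ δ ⁻¹' K) := by
    have := hrel.2.compl.isClosed.trans hK.1
    rwa [← preimage_compl, Subtype.image_preimage_coe, Homeomorph.image_inv, compl_inter,
      inter_union_distrib_left, inter_compl_self, union_empty, ← sdiff_eq] at this
  obtain ⟨Q, hQ, hKQ, hQK⟩ := exists_clopen_of_closed_subset_open hclosed
    (hK.1.preimage δ.continuous).isOpen_compl fun _ h => h.2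
  exact ⟨Q, hQ, hKQ, subset_compl_iff_disjoint_right.1 hQK⟩

theorem exists_finite_invariant_clopen_superset {X : Type*} [TopologicalSpace X]
    {Δ : Subgroup (X ≃ₜ X)} (hΔ : (Δ : Set (X ≃ₜ X)).Finite) {G₀ : Set (Set X)}
    (hG₀ : G₀.Finite) (hG₀cl : ∀ S ∈ G₀, IsClopen S) :
    ∃ G, G₀ ⊆ G ∧ G.Finite ∧ (∀ S ∈ G, IsClopen S) ∧
      ∀ δ ∈ Δ, ∀ S ∈ G, (δ : X ≃ₜ X) '' S ∈ G := by
  refine ⟨image2 (fun (δ : X ≃ₜ X) S => δ '' S) Δ G₀,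
    fun S hS => ⟨1, one_mem Δ, S, hS, image_id S⟩, hΔ.image2 _ hG₀, ?_, ?_⟩
  · rintro _ ⟨δ, -, S, hS, rfl⟩
    change IsClopen (δ '' S)
    rw [δ.image_eq_preimage_symm]
    exact (hG₀cl S hS).preimage δ.symm.continuous
  · rintro δ hδ _ ⟨δ', hδ', S, hS, rfl⟩
    exact ⟨δ * δ', mul_mem hδ hδ', S, hS, δ.image_mul δ' S⟩

theorem refining_to_compatible_general {X : Type*} [TopologicalSpace X]
    (hX : IsCantorSpace X) (Γ : Subgroup (X ≃ₜ X)) (hample : IsAmpleGroup Γ)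
    (K : Set X) (hK : IsEtale Γ K)
    (𝒜 : Set (Set X)) (Δ : Subgroup (X ≃ₜ X)) (hus : IsUnitSystem 𝒜 Δ)
    (hfin : 𝒜.Finite) (hΔΓ : Δ ≤ Γ) :
    ∃ (𝒜' : Set (Set X)) (Δ' : Subgroup (X ≃ₜ X)),
      IsUnitSystem 𝒜' Δ' ∧ 𝒜'.Finite ∧ IsKCompatible K 𝒜' Δ' ∧
      𝒜 ⊆ 𝒜' ∧ Δ ≤ Δ' ∧ Δ' ≤ Γ := by
  obtain ⟨-, _, _, _, -⟩ := hX
  have hΔfin := hus.finite_subgroup hfin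
  choose! Q hQcl hQ using fun δ (hδ : δ ∈ Δ) => hK.exists_isClopen_separator (hΔΓ hδ)
  obtain ⟨G, hG₀G, hGfin, hGcl, hGinv⟩ := exists_finite_invariant_clopen_superset hΔfin
    (hfin.union (hΔfin.image Q)) (by
      rintro S (hS | ⟨δ, hδ, rfl⟩)
      exacts [hus.clopen S hS, hQcl δ hδ])
  have h𝒜G : 𝒜 ⊆ G := subset_union_left.trans hG₀G
  refine ⟨cellAlg G, pieceGroup Δ G hGinv, hus.cellAlg_pieceGroup hGinv hfin h𝒜G hGfin hGcl,
    cellAlg_finite hGfin, ?_, h𝒜G.trans subset_cellAlg, le_pieceGroup hGinv,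
    pieceGroup_le hGinv hample.2.2.1 hΔΓ hGfin hGcl⟩
  exact isKCompatible_cellAlg_pieceGroup hGinv fun δ hδ =>
    ⟨Q δ, hG₀G (Or.inr ⟨δ, hδ, rfl⟩), hQ δ hδ⟩

/-- any finite unit system inside `Γ` refines to a `K`-compatible one. -/
theorem refining_to_compatible {X : Type*} [TopologicalSpace X]
    (hX : IsCantorSpace X) (Γ : Subgroup (X ≃ₜ X)) (hample : IsAmpleGroup Γ)
    (hmin : IsMinimalGroup Γ) (K : Set X) (hK : IsEtale Γ K)
    (𝒜 : Set (Set X)) (Δ : Subgroup (X ≃ₜ X)) (hus : IsUnitSystem 𝒜 Δ)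
    (hfin : 𝒜.Finite) (hΔΓ : Δ ≤ Γ) :
    ∃ (𝒜' : Set (Set X)) (Δ' : Subgroup (X ≃ₜ X)),
      IsUnitSystem 𝒜' Δ' ∧ 𝒜'.Finite ∧ IsKCompatible K 𝒜' Δ' ∧
      𝒜 ⊆ 𝒜' ∧ Δ ≤ Δ' ∧ Δ' ≤ Γ :=
  refining_to_compatible_general hX Γ hample K hK 𝒜 Δ hus hfin hΔΓ
end

section
/- Let Γ be an ample group over the Cantor space X acting minimally and let K ⊆ X be Γ-étale. Let Γ_K denote the smallest full subgroup of Homeo(K) containing γ_K for every involution γ ∈ Γ. Then Γ_K = {γ restricted to K : γ ∈ Γ and γ(K) = K}. In particular, Γ_K is an ample group over K. -/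
open MeasureTheory Set

/-!
Every `γ_K` is a restriction: extend `γ(K) ∩ K` to a `γ`-invariant clopen set `W` and take the
involution which is `γ` on `W` and the identity off `W`. Conversely a restriction `γ|K` agrees near
each point of `K` with some `τ_K`: with the identity near fixed points, and near a moved point with
the involution `τ ∈ Γ` exchanging a small clopen set `N`, disjoint from `γ N`, with `γ N`. Hence it
lies in every full group containing the `τ_K`.

The real work is that the restrictions form a full group. A homeomorphism of `K` which is piecewise
a restriction extends to a map `φ : X → X` which is locally in the finite group `G` generated by
the finitely many pieces. The set `Ω` of points on whose `G`-orbit `φ` is injective is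
`G`-invariant, contains `K`, and is clopen because fixed-point sets are. Orbits being finite, `φ` on
`Ω` and the identity off `Ω` is a homeomorphism of `X`, locally in `G`, hence in the full group `Γ`.
-/

open Set Filter Topology Function

section LocallyIn

variable {Y : Type*} [TopologicalSpace Y] {G : Subgroup (Y ≃ₜ Y)} {f g : Y → Y}

def IsLocallyIn (G : Subgroup (Y ≃ₜ Y)) (f : Y → Y) : Prop :=
  ∀ x, ∃ γ ∈ G, f =ᶠ[𝓝 x] γ

lemma isLocallyIn_of_mem {γ : Y ≃ₜ Y} (hγ : γ ∈ G) : IsLocallyIn G γ :=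
  fun _ => ⟨γ, hγ, EventuallyEq.rfl⟩

lemma IsLocallyIn.mono {H : Subgroup (Y ≃ₜ Y)} (hf : IsLocallyIn G f) (hGH : G ≤ H) :
    IsLocallyIn H f :=
  fun x => let ⟨γ, hγ, h⟩ := hf x; ⟨γ, hGH hγ, h⟩

lemma IsLocallyIn.continuous (hf : IsLocallyIn G f) : Continuous f :=
  continuous_iff_continuousAt.2 fun x =>
    let ⟨γ, _, h⟩ := hf x; γ.continuous.continuousAt.congr h.symm

lemma IsLocallyIn.orbitRelOf_apply (hf : IsLocallyIn G f) (x : Y) : orbitRelOf G x (f x) :=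
  let ⟨γ, hγ, h⟩ := hf x; ⟨γ, hγ, h.eq_of_nhds.symm⟩

lemma IsLocallyIn.comp_mem (hf : IsLocallyIn G f) {a : Y ≃ₜ Y} (ha : a ∈ G) :
    IsLocallyIn G (f ∘ a) := fun x =>
  let ⟨γ, hγ, h⟩ := hf (a x); ⟨γ * a, mul_mem hγ ha, h.comp_tendsto a.continuous.continuousAt⟩

lemma IsLocallyIn.piecewise {s : Set Y} [DecidablePred (· ∈ s)] (hs : IsClopen s)
    (hf : IsLocallyIn G f) (hg : IsLocallyIn G g) : IsLocallyIn G (s.piecewise f g) := by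
  intro x
  by_cases hx : x ∈ s
  · obtain ⟨γ, hγ, h⟩ := hf x
    refine ⟨γ, hγ, (eventuallyEq_of_mem (hs.isOpen.mem_nhds hx) ?_).trans h⟩
    exact fun y hy => piecewise_eq_of_mem _ _ _ hy
  · obtain ⟨γ, hγ, h⟩ := hg x
    refine ⟨γ, hγ, (eventuallyEq_of_mem (hs.isClosed.isOpen_compl.mem_nhds hx) ?_).trans h⟩
    exact fun y hy => piecewise_eq_of_notMem _ _ _ hy

lemma IsLocallyIn.isClopen_setOf_eq [T2Space Y] (hfix : ∀ γ ∈ G, IsOpen {x | γ x = x})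
    (hf : IsLocallyIn G f) (hg : IsLocallyIn G g) : IsClopen {x | f x = g x} := by
  refine ⟨isClosed_eq hf.continuous hg.continuous, isOpen_iff_mem_nhds.2 fun x hx => ?_⟩
  obtain ⟨γ, hγ, hfγ⟩ := hf x
  obtain ⟨δ, hδ, hgδ⟩ := hg x
  have hfixed : (δ⁻¹ * γ) x = x := by
    change δ.symm (γ x) = x
    rw [δ.symm_apply_eq, ← hfγ.eq_of_nhds, ← hgδ.eq_of_nhds]
    exact hx
  filter_upwards [hfγ, hgδ, (hfix _ (mul_mem (inv_mem hδ) hγ)).mem_nhds hfixed] with y hfy hgy hy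
  rw [hfy, hgy]
  exact δ.symm_apply_eq.1 hy

lemma IsFullGroup.mem_of_isLocallyIn [CompactSpace Y] [T2Space Y] [TotallyDisconnectedSpace Y]
    (hG : IsFullGroup G) {g : Y ≃ₜ Y} (hg : IsLocallyIn G g) : g ∈ G := by
  choose γ hγ hgγ using hg
  have hcover : TopologicalSpace.IsOpenCover fun x =>
      (⟨interior {y | g y = γ x y}, isOpen_interior⟩ : TopologicalSpace.Opens Y) :=
    .of_sets (fun _ => isOpen_interior) <|
      eq_univ_of_forall fun x => mem_iUnion.2 ⟨x, mem_interior_iff_mem_nhds.2 (hgγ x)⟩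
  obtain ⟨n, W, hW, hWcover, hWdisj⟩ := hcover.exists_finite_nonempty_disjoint_clopen_cover
  choose i hi using fun j => (hW j).2
  exact hG g ⟨n, fun j => W j, fun j => γ (i j), fun j => (W j).isClopen, fun j => hγ _,
    fun j k hjk => TopologicalSpace.Clopens.coe_disjoint.2 (hWdisj hjk),
    univ_subset_iff.1 hWcover, fun j _ hy => interior_subset (s := {y | g y = γ (i j) y}) (hi j hy)⟩

lemma exists_isLocallyIn_eqOn {ι : Type*} [Finite ι] {W : ι → Set Y} (hW : ∀ i, IsClopen (W i))
    (hWdisj : Pairwise (Disjoint on W)) {a : ι → Y ≃ₜ Y} (ha : ∀ i, a i ∈ G) :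
    ∃ φ : Y → Y, IsLocallyIn G φ ∧ ∀ i, EqOn φ (a i) (W i) := by
  classical
  let φ : Y → Y := fun x => if h : ∃ i, x ∈ W i then a h.choose x else x
  have hφ : ∀ i, EqOn φ (a i) (W i) := by
    intro i x hx
    have h : ∃ i, x ∈ W i := ⟨i, hx⟩
    have hi : h.choose = i := by
      by_contra hne
      exact (hWdisj hne).ne_of_mem h.choose_spec hx rfl
    simp only [φ, dif_pos h, hi]
  refine ⟨φ, fun x => ?_, hφ⟩
  by_cases h : ∃ i, x ∈ W i
  · obtain ⟨i, hi⟩ := h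
    exact ⟨a i, ha i, eventuallyEq_of_mem ((hW i).isOpen.mem_nhds hi) (hφ i)⟩
  · have hopen : IsOpen (⋃ i, W i)ᶜ :=
      (isClosed_iUnion_of_finite fun i => (hW i).isClosed).isOpen_compl
    refine ⟨1, one_mem G, eventuallyEq_of_mem (hopen.mem_nhds (by simpa using h)) fun y hy => ?_⟩
    have hy' : ¬∃ i, y ∈ W i := by simpa using hy
    simp only [φ, dif_neg hy']
    rfl

end LocallyIn

section FiniteGroup

variable {Y : Type*} [TopologicalSpace Y] {G : Subgroup (Y ≃ₜ Y)} {φ : Y → Y}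

lemma orbitRelOf_equivalence (G : Subgroup (Y ≃ₜ Y)) : Equivalence (orbitRelOf G) where
  refl _ := ⟨1, one_mem G, rfl⟩
  symm := fun ⟨γ, hγ, h⟩ => ⟨γ⁻¹, inv_mem hγ, by rw [← h]; exact γ.symm_apply_apply _⟩
  trans := fun ⟨γ, hγ, h⟩ ⟨δ, hδ, h'⟩ => ⟨δ * γ, mul_mem hδ hγ, by rw [← h', ← h]; rfl⟩

lemma finite_setOf_orbitRelOf (hG : (G : Set (Y ≃ₜ Y)).Finite) (x : Y) :
    {y | orbitRelOf G x y}.Finite :=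
  (hG.image fun γ => γ x).subset fun _ ⟨γ, hγ, h⟩ => ⟨γ, hγ, h⟩

lemma IsLocallyIn.bijective (hG : (G : Set (Y ≃ₜ Y)).Finite) (hφ : IsLocallyIn G φ)
    (hinj : ∀ x, InjOn φ {y | orbitRelOf G x y}) : Bijective φ := by
  have horb := orbitRelOf_equivalence G
  refine ⟨fun x y hxy => hinj x (horb.refl x) ?_ hxy, fun y => ?_⟩
  · exact horb.trans (hφ.orbitRelOf_apply x) (hxy ▸ horb.symm (hφ.orbitRelOf_apply y))
  · have hmaps : MapsTo φ {z | orbitRelOf G y z} {z | orbitRelOf G y z} :=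
      fun z hz => horb.trans hz (hφ.orbitRelOf_apply z)
    obtain ⟨x, -, hx⟩ :=
      ((finite_setOf_orbitRelOf hG y).injOn_iff_bijOn_of_mapsTo hmaps).1 (hinj y) |>.surjOn
        (horb.refl y)
    exact ⟨x, hx⟩

lemma IsLocallyIn.isClopen_setOf_injOn [T2Space Y] (hG : (G : Set (Y ≃ₜ Y)).Finite)
    (hfix : ∀ γ ∈ G, IsOpen {x | γ x = x}) (hφ : IsLocallyIn G φ) :
    IsClopen {x | InjOn φ {y | orbitRelOf G x y}} := by
  have h : {x | InjOn φ {y | orbitRelOf G x y}} = ⋂ a ∈ (G : Set (Y ≃ₜ Y)),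
      ⋂ b ∈ (G : Set (Y ≃ₜ Y)), {x | φ (a x) = φ (b x)}ᶜ ∪ {x | a x = b x} := by
    ext x
    simp only [InjOn, mem_ofPred_eq, mem_iInter, mem_union, mem_compl_iff, SetLike.mem_coe]
    constructor
    · intro h a ha b hb
      exact or_iff_not_imp_left.2 fun hab => h ⟨a, ha, rfl⟩ ⟨b, hb, rfl⟩ (not_not.1 hab)
    · rintro h _ ⟨a, ha, rfl⟩ _ ⟨b, hb, rfl⟩ hab
      exact (h a ha b hb).resolve_left (not_not.2 hab)
  rw [h]
  exact hG.isClopen_biInter fun a ha => hG.isClopen_biInter fun b hb =>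
    ((hφ.comp_mem ha).isClopen_setOf_eq hfix (hφ.comp_mem hb)).compl.union
      ((isLocallyIn_of_mem ha).isClopen_setOf_eq hfix (isLocallyIn_of_mem hb))

theorem exists_homeomorph_isLocallyIn_eqOn [CompactSpace Y] [T2Space Y]
    (hG : (G : Set (Y ≃ₜ Y)).Finite) (hfix : ∀ γ ∈ G, IsOpen {x | γ x = x}) {K : Set Y}
    (hK : ∀ γ ∈ G, MapsTo γ K K) (hφ : IsLocallyIn G φ) (hinj : InjOn φ K) :
    ∃ f : Y ≃ₜ Y, IsLocallyIn G f ∧ EqOn f φ K := by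
  classical
  have horb := orbitRelOf_equivalence G
  set Ω := {x | InjOn φ {y | orbitRelOf G x y}}
  have horbit_eq : ∀ {x y}, orbitRelOf G x y → {z | orbitRelOf G x z} = {z | orbitRelOf G y z} :=
    fun h => ext fun _ => ⟨horb.trans (horb.symm h), horb.trans h⟩
  have hf : IsLocallyIn G (Ω.piecewise φ id) :=
    hφ.piecewise (hφ.isClopen_setOf_injOn hG hfix) (isLocallyIn_of_mem (one_mem G))
  have hinj' : ∀ x, InjOn (Ω.piecewise φ id) {y | orbitRelOf G x y} := by
    intro x
    by_cases hx : x ∈ Ω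
    · have heq : EqOn (Ω.piecewise φ id) φ {y | orbitRelOf G x y} := fun y hy =>
        piecewise_eq_of_mem _ _ _ (show y ∈ Ω by rwa [mem_ofPred_eq, ← horbit_eq hy])
      exact heq.injOn_iff.2 hx
    · have heq : EqOn (Ω.piecewise φ id) id {y | orbitRelOf G x y} := fun y hy =>
        piecewise_eq_of_notMem _ _ _ (show y ∉ Ω by rwa [mem_ofPred_eq, ← horbit_eq hy])
      exact heq.injOn_iff.2 (injOn_id _)
  have hKΩ : K ⊆ Ω := fun x hx => hinj.mono fun _ ⟨γ, hγ, h⟩ => h ▸ hK γ hγ hx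
  exact ⟨hf.continuous.homeoOfEquivCompactToT2 (f := .ofBijective _ (hf.bijective hG hinj')), hf,
    fun x hx => piecewise_eq_of_mem _ _ _ (hKΩ hx)⟩

end FiniteGroup

section Restriction

variable {X : Type*} [TopologicalSpace X] {Γ : Subgroup (X ≃ₜ X)} {K : Set X}

def setStabilizer (K : Set X) : Subgroup (X ≃ₜ X) where
  carrier := {γ | γ '' K = K}
  one_mem' := image_id K
  mul_mem' {a b} ha hb := by
    change (a ∘ b) '' K = K
    rw [image_comp, hb, ha]
  inv_mem' {a} ha := by
    change a.symm '' K = K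
    rw [a.image_symm]
    nth_rw 1 [← ha]
    exact a.preimage_image K

def restrSubgroup (Γ : Subgroup (X ≃ₜ X)) (K : Set X) : Subgroup (K ≃ₜ K) where
  carrier := restrGroup Γ K
  one_mem' := ⟨1, one_mem Γ, (setStabilizer K).one_mem, fun _ => rfl⟩
  mul_mem' := by
    rintro g h ⟨γ, hγ, hγK, hg⟩ ⟨δ, hδ, hδK, hh⟩
    refine ⟨γ * δ, mul_mem hγ hδ, (setStabilizer K).mul_mem hγK hδK, fun x => ?_⟩
    change (g (h x) : X) = γ (δ x)
    rw [hg, hh]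
  inv_mem' := by
    rintro g ⟨γ, hγ, hγK, hg⟩
    refine ⟨γ⁻¹, inv_mem hγ, (setStabilizer K).inv_mem hγK, fun x => ?_⟩
    change (g.symm x : X) = γ.symm x
    rw [γ.eq_symm_apply, ← hg, g.apply_symm_apply]

lemma mem_restrGroup_of_forall_apply_eq {g : K ≃ₜ K} {γ : X ≃ₜ X} (hγ : γ ∈ Γ)
    (h : ∀ x : K, (g x : X) = γ x) : g ∈ restrGroup Γ K := by
  refine ⟨γ, hγ, Subset.antisymm ?_ fun y hy => ?_, h⟩
  · rintro _ ⟨x, hx, rfl⟩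
    exact h ⟨x, hx⟩ ▸ (g ⟨x, hx⟩).2
  · exact ⟨g.symm ⟨y, hy⟩, (g.symm ⟨y, hy⟩).2, by rw [← h, g.apply_symm_apply]⟩

lemma exists_forall_restrGroup_subset_image (K : Set X) :
    ∃ R : (X ≃ₜ X) → (K ≃ₜ K), ∀ Γ : Subgroup (X ≃ₜ X), restrGroup Γ K ⊆ R '' Γ := by
  classical
  refine ⟨fun γ => if h : ∃ g : K ≃ₜ K, ∀ x : K, (g x : X) = γ x then h.choose else 1,
    fun Γ g ⟨γ, hγ, _, hg⟩ => ⟨γ, hγ, ?_⟩⟩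
  have h : ∃ g : K ≃ₜ K, ∀ x : K, (g x : X) = γ x := ⟨g, hg⟩
  ext x
  simp only [dif_pos h, h.choose_spec, hg]

lemma isLocallyFiniteGroup_restrSubgroup (hΓ : IsLocallyFiniteGroup Γ) (K : Set X) :
    IsLocallyFiniteGroup (restrSubgroup Γ K) := by
  classical
  intro S hS
  have hlift : ∀ g ∈ S, ∃ γ, γ ∈ Γ ∧ γ '' K = K ∧ ∀ x : K, (g x : X) = γ x := fun g hg => hS hg
  choose! L hLΓ hLK hL using hlift
  obtain ⟨R, hR⟩ := exists_forall_restrGroup_subset_image K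
  have hLS : (↑(S.image L) : Set (X ≃ₜ X)) ⊆ Γ := by
    simpa [Set.subset_def] using hLΓ
  have hle : Subgroup.closure (S : Set (K ≃ₜ K)) ≤
      restrSubgroup (Subgroup.closure ↑(S.image L)) K :=
    (Subgroup.closure_le _).2 fun g hg =>
      ⟨L g, Subgroup.subset_closure (by simpa using ⟨g, hg, rfl⟩), hLK g hg, hL g hg⟩
  exact ((hΓ _ hLS).image R).subset fun g hg => hR _ (hle hg)

lemma isClopen_setOf_apply_eq_of_mem_restrGroup (hfix : ∀ γ ∈ Γ, IsClopen {x | γ x = x})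
    {g : K ≃ₜ K} (hg : g ∈ restrGroup Γ K) : IsClopen {x : K | g x = x} := by
  obtain ⟨γ, hγ, -, hgγ⟩ := hg
  have h : {x : K | g x = x} = (↑) ⁻¹' {y | γ y = y} := by
    ext x
    simp [Subtype.ext_iff, hgγ x]
  rw [h]
  exact (hfix γ hγ).preimage continuous_subtype_val

end Restriction

def Function.Involutive.toHomeomorph {Y : Type*} [TopologicalSpace Y] {f : Y → Y}
    (hf : Involutive f) (hc : Continuous f) : Y ≃ₜ Y where
  toEquiv := hf.toPerm f
  continuous_toFun := hc
  continuous_invFun := hc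

lemma Function.Involutive.piecewise_id {Y : Type*} {f : Y → Y} (hf : Involutive f) {s : Set Y}
    [DecidablePred (· ∈ s)] (hs : MapsTo f s s) : Involutive (s.piecewise f id) := by
  intro x
  by_cases hx : x ∈ s
  · rw [piecewise_eq_of_mem _ _ _ hx, piecewise_eq_of_mem _ _ _ (hs hx), hf x]
  · rw [piecewise_eq_of_notMem _ _ _ hx, id, piecewise_eq_of_notMem _ _ _ hx, id]

section Involutions

variable {X : Type*} [TopologicalSpace X] {Γ : Subgroup (X ≃ₜ X)} {K : Set X}

lemma inducedMap_involutive {γ : X ≃ₜ X} (hγ : Involutive γ) (K : Set X) :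
    Involutive (inducedMap γ K) := by
  intro x
  by_cases h : γ x ∈ K
  · have h' : γ (γ x) ∈ K := (hγ x).symm ▸ x.2
    have e : inducedMap γ K x = ⟨γ x, h⟩ := dif_pos h
    rw [e]
    exact (dif_pos h').trans (Subtype.ext (hγ x))
  · have e : inducedMap γ K x = x := dif_neg h
    rw [e, e]

lemma continuous_inducedMap {γ : X ≃ₜ X} (hK : IsClopen {x : K | γ x ∈ K}) :
    Continuous (inducedMap γ K) := by
  classical
  rw [Topology.IsEmbedding.subtypeVal.continuous_iff]
  have h : Subtype.val ∘ inducedMap γ K = {x : K | γ x ∈ K}.piecewise (γ ∘ (↑)) (↑) := by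
    ext x
    by_cases hx : γ x ∈ K <;> simp [inducedMap, hx]
  rw [h]
  exact (γ.continuous.comp continuous_subtype_val).piecewise (by simp [hK.frontier_eq])
    continuous_subtype_val

lemma IsEtale.isClopen_setOf_apply_mem (hK : IsEtale Γ K) {γ : X ≃ₜ X} (hγ : γ ∈ Γ)
    (hinv : Involutive γ) : IsClopen {x : K | γ x ∈ K} := by
  have h := (hK.2 γ hγ K ⟨subset_rfl, by simpa using isClopen_univ⟩).2
  rwa [image_eq_preimage_of_inverse hinv.leftInverse hinv.rightInverse, preimage_inter,
    Subtype.coe_preimage_self, inter_univ] at h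

def inducedInvolutions (Γ : Subgroup (X ≃ₜ X)) (K : Set X) : Set (K ≃ₜ K) :=
  {f | ∃ γ : X ≃ₜ X, γ ∈ Γ ∧ γ * γ = 1 ∧ ∀ x : K, f x = inducedMap γ K x}

variable [CompactSpace X] [T2Space X] [TotallyDisconnectedSpace X]

lemma exists_isClopen_preimage_val_eq (hK : IsClosed K) {A : Set K} (hA : IsClopen A) :
    ∃ W : Set X, IsClopen W ∧ (↑) ⁻¹' W = A := by
  have himage : ∀ {B : Set K}, IsClosed B → IsClosed ((↑) '' B : Set X) :=
    fun hB => hK.isClosedEmbedding_subtypeVal.isClosedMap _ hB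
  obtain ⟨W, hW, hAW, hWA⟩ := exists_clopen_of_closed_subset_open (himage hA.isClosed)
    (himage hA.isOpen.isClosed_compl).isOpen_compl
    (by rintro _ ⟨x, hx, rfl⟩ ⟨y, hy, hxy⟩; exact hy (Subtype.val_injective hxy ▸ hx))
  refine ⟨W, hW, Subset.antisymm (fun x hx => ?_) fun x hx => hAW ⟨x, hx, rfl⟩⟩
  by_contra hxA
  exact hWA hx ⟨x, hxA, rfl⟩

lemma exists_isClopen_disjoint_image (γ : X ≃ₜ X) {x : X} (hx : γ x ≠ x) :
    ∃ N : Set X, IsClopen N ∧ x ∈ N ∧ Disjoint N (γ '' N) := by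
  obtain ⟨U, V, hU, hV, hxU, hxV, hUV⟩ := t2_separation hx.symm
  obtain ⟨N, hN, hxN, hNUV⟩ :=
    compact_exists_isClopen_in_isOpen (hU.inter (hV.preimage γ.continuous)) ⟨hxU, hxV⟩
  refine ⟨N, hN, hxN, disjoint_left.2 ?_⟩
  rintro y hy ⟨z, hz, rfl⟩
  exact disjoint_left.1 hUV (hNUV hy).1 (hNUV hz).2

lemma IsFullGroup.exists_involutive_eqOn (hΓ : IsFullGroup Γ) {γ : X ≃ₜ X} (hγ : γ ∈ Γ)
    {N : Set X} (hN : IsClopen N) (hd : Disjoint N (γ '' N)) :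
    ∃ τ ∈ Γ, Involutive τ ∧ EqOn τ γ N := by
  classical
  set σ := N.piecewise γ ((γ '' N).piecewise γ.symm id)
  have hσ : IsLocallyIn Γ σ := (isLocallyIn_of_mem hγ).piecewise hN <|
    (isLocallyIn_of_mem (inv_mem hγ)).piecewise ⟨γ.isClosed_image.2 hN.1, γ.isOpen_image.2 hN.2⟩
      (isLocallyIn_of_mem (one_mem Γ))
  have hinv : Involutive σ := by
    intro x
    by_cases hx : x ∈ N
    · have : γ x ∉ N := fun h => disjoint_left.1 hd h ⟨x, hx, rfl⟩
      simp [σ, hx, this]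
    · by_cases hx' : x ∈ γ '' N
      · obtain ⟨y, hy, rfl⟩ := hx'
        simp [σ, hy, hx]
      · simp [σ, hx, hx']
  exact ⟨hinv.toHomeomorph hσ.continuous, hΓ.mem_of_isLocallyIn hσ, hinv,
    fun x hx => piecewise_eq_of_mem _ _ _ hx⟩

lemma inducedInvolutions_subset_restrGroup (hΓ : IsFullGroup Γ) (hK : IsEtale Γ K) :
    inducedInvolutions Γ K ⊆ restrGroup Γ K := by
  classical
  rintro f ⟨γ, hγ, hγγ, hf⟩
  have hinv : Involutive γ := fun x => DFunLike.congr_fun hγγ x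
  obtain ⟨W₀, hW₀, hW₀K⟩ :=
    exists_isClopen_preimage_val_eq hK.1 (hK.isClopen_setOf_apply_mem hγ hinv)
  have hW₀K' : ∀ x : K, (x : X) ∈ W₀ ↔ γ x ∈ K := fun x => Set.ext_iff.1 hW₀K x
  set W := W₀ ∩ γ ⁻¹' W₀
  have hWγ : MapsTo γ W W := fun x hx => ⟨hx.2, by rw [mem_preimage, hinv x]; exact hx.1⟩
  have hWK : ∀ x : K, (x : X) ∈ W ↔ γ x ∈ K := by
    refine fun x => ⟨fun hx => (hW₀K' x).1 hx.1, fun hx => ⟨(hW₀K' x).2 hx, ?_⟩⟩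
    refine (hW₀K' ⟨γ x, hx⟩).2 ?_
    rw [hinv x]
    exact x.2
  have hσ : IsLocallyIn Γ (W.piecewise γ id) := (isLocallyIn_of_mem hγ).piecewise
    (hW₀.inter (hW₀.preimage γ.continuous)) (isLocallyIn_of_mem (one_mem Γ))
  refine mem_restrGroup_of_forall_apply_eq (γ := (hinv.piecewise_id hWγ).toHomeomorph
    hσ.continuous) (hΓ.mem_of_isLocallyIn hσ) fun x => ?_
  change (f x : X) = W.piecewise γ id x
  rw [hf x]
  by_cases h : γ x ∈ K
  · simp [inducedMap, h, (hWK x).2 h]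
  · simp [inducedMap, h, mt (hWK x).1 h]

lemma restrGroup_subset_of_inducedInvolutions_subset (hΓ : IsFullGroup Γ)
    (hfix : ∀ γ ∈ Γ, IsOpen {x | γ x = x}) (hK : IsEtale Γ K) {H : Subgroup (K ≃ₜ K)}
    (hH : IsFullGroup H) (hHK : inducedInvolutions Γ K ⊆ H) : restrGroup Γ K ⊆ H := by
  have : CompactSpace K := isCompact_iff_compactSpace.1 hK.1.isCompact
  rintro g ⟨γ, hγ, -, hg⟩
  refine hH.mem_of_isLocallyIn fun x => ?_
  by_cases hx : γ x = x
  · refine ⟨1, one_mem H, eventuallyEq_of_mem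
      (((hfix γ hγ).preimage continuous_subtype_val).mem_nhds hx) fun y hy => ?_⟩
    exact Subtype.ext ((hg y).trans hy)
  · obtain ⟨N, hN, hxN, hd⟩ := exists_isClopen_disjoint_image γ hx
    obtain ⟨τ, hτ, hinv, hτγ⟩ := hΓ.exists_involutive_eqOn hγ hN hd
    refine ⟨(inducedMap_involutive hinv K).toHomeomorph
      (continuous_inducedMap (hK.isClopen_setOf_apply_mem hτ hinv)),
      hHK ⟨τ, hτ, Homeomorph.ext hinv, fun _ => rfl⟩, eventuallyEq_of_mem
      ((hN.isOpen.preimage continuous_subtype_val).mem_nhds hxN) fun y hy => ?_⟩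
    have hτy : τ y = γ y := hτγ hy
    have hγy : γ y ∈ K := hg y ▸ (g y).2
    change g y = inducedMap τ K y
    rw [inducedMap, dif_pos (hτy ▸ hγy)]
    exact Subtype.ext ((hg y).trans hτy.symm)

end Involutions

section Ample

variable {X : Type*} [TopologicalSpace X] [CompactSpace X] [T2Space X]
  [TotallyDisconnectedSpace X] {Γ : Subgroup (X ≃ₜ X)} {K : Set X}

lemma isFullGroup_restrSubgroup (hlf : IsLocallyFiniteGroup Γ) (hΓ : IsFullGroup Γ)
    (hfix : ∀ γ ∈ Γ, IsOpen {x | γ x = x}) (hK : IsClosed K) :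
    IsFullGroup (restrSubgroup Γ K) := by
  classical
  rintro g ⟨n, U, δ, hU, hδ, hUdisj, hUcover, hgδ⟩
  choose γ hγΓ hγK hγδ using hδ
  set G := Subgroup.closure (range γ)
  have hγG : ∀ i, γ i ∈ G := fun i => Subgroup.subset_closure (mem_range_self i)
  have hGfin : (G : Set (X ≃ₜ X)).Finite := by
    simpa using hlf (Finset.univ.image γ) (by simpa [range_subset_iff] using hγΓ)
  have hGΓ : G ≤ Γ := (Subgroup.closure_le Γ).2 (range_subset_iff.2 hγΓ)
  have hGK : G ≤ setStabilizer K := (Subgroup.closure_le _).2 (range_subset_iff.2 hγK)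
  obtain ⟨C, hC, hUC, -, -, hCdisj⟩ := exists_clopen_partition_of_clopen_cover
    (Z := fun i => (Subtype.val '' U i : Set X)) (D := fun _ => univ)
    (fun i => hK.isClosedEmbedding_subtypeVal.isClosedMap _ (hU i).isClosed)
    (fun _ => isClopen_univ) (fun _ => subset_univ _)
    (fun i _ j _ hij =>
      (hUdisj hij).image Subtype.val_injective.injOn (subset_univ _) (subset_univ _))
  obtain ⟨φ, hφ, hφC⟩ := exists_isLocallyIn_eqOn hC
    (fun i j hij => hCdisj (mem_univ i) (mem_univ j) hij) hγG
  have hφg : ∀ x : K, φ x = g x := by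
    intro x
    obtain ⟨i, hi⟩ := mem_iUnion.1 (hUcover.symm ▸ mem_univ x : x ∈ ⋃ i, U i)
    rw [hφC i (hUC i ⟨x, hi, rfl⟩), hgδ i x hi, hγδ i x]
  have hφK : InjOn φ K := fun x hx y hy hxy => congrArg Subtype.val <| g.injective <|
    Subtype.ext ((hφg ⟨x, hx⟩).symm.trans (hxy.trans (hφg ⟨y, hy⟩)))
  obtain ⟨f, hf, hfφ⟩ := exists_homeomorph_isLocallyIn_eqOn hGfin (fun a ha => hfix a (hGΓ ha))
    (fun a ha => mapsTo_iff_image_subset.2 (hGK ha).subset) hφ hφK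
  exact mem_restrGroup_of_forall_apply_eq (hΓ.mem_of_isLocallyIn (hf.mono hGΓ))
    fun x => ((hfφ x.2).trans (hφg x)).symm

lemma isAmpleGroup_restrSubgroup (hΓ : IsAmpleGroup Γ) (hK : IsClosed K) :
    IsAmpleGroup (restrSubgroup Γ K) := by
  obtain ⟨hc, hlf, hfull, hfix⟩ := hΓ
  obtain ⟨R, hR⟩ := exists_forall_restrGroup_subset_image K
  exact ⟨(hc.image R).mono (hR Γ), isLocallyFiniteGroup_restrSubgroup hlf K,
    isFullGroup_restrSubgroup hlf hfull (fun γ hγ => (hfix γ hγ).isOpen) hK,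
    fun _ hg => isClopen_setOf_apply_eq_of_mem_restrGroup hfix hg⟩

end Ample

theorem restrGroup_eq_smallest_full_general {X : Type*} [TopologicalSpace X]
    (hX : IsCantorSpace X) (Γ : Subgroup (X ≃ₜ X)) (hample : IsAmpleGroup Γ)
    (K : Set X) (hK : IsEtale Γ K) :
    ∃ ΓK : Subgroup ((K : Set X) ≃ₜ (K : Set X)),
      ({f : (K : Set X) ≃ₜ (K : Set X) | ∃ γ : X ≃ₜ X, γ ∈ Γ ∧ γ * γ = 1 ∧
          ∀ x : K, f x = inducedMap γ K x} ⊆ (ΓK : Set ((K : Set X) ≃ₜ (K : Set X)))) ∧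
      IsFullGroup ΓK ∧
      (∀ H : Subgroup ((K : Set X) ≃ₜ (K : Set X)),
        {f : (K : Set X) ≃ₜ (K : Set X) | ∃ γ : X ≃ₜ X, γ ∈ Γ ∧ γ * γ = 1 ∧
          ∀ x : K, f x = inducedMap γ K x} ⊆ (H : Set ((K : Set X) ≃ₜ (K : Set X))) →
        IsFullGroup H → ΓK ≤ H) ∧
      (ΓK : Set ((K : Set X) ≃ₜ (K : Set X))) = restrGroup Γ K ∧
      IsAmpleGroup ΓK := by
  obtain ⟨-, _, _, _, -⟩ := hX
  have hΓK := isAmpleGroup_restrSubgroup hample hK.1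
  obtain ⟨-, -, hfull, hfix⟩ := hample
  exact ⟨restrSubgroup Γ K, inducedInvolutions_subset_restrGroup hfull hK, hΓK.2.2.1,
    fun H hHK hH => restrGroup_subset_of_inducedInvolutions_subset hfull
      (fun γ hγ => (hfix γ hγ).isOpen) hK hH hHK, rfl, hΓK⟩

/-- the smallest full subgroup of `Homeo(K)` containing the maps `γ_K`
for involutions `γ ∈ Γ` is exactly the group of restrictions to `K` of elements of `Γ`
mapping `K` onto itself; in particular it is an ample group over `K`. -/
theorem restrGroup_eq_smallest_full {X : Type*} [TopologicalSpace X]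
    (hX : IsCantorSpace X) (Γ : Subgroup (X ≃ₜ X)) (hample : IsAmpleGroup Γ)
    (hmin : IsMinimalGroup Γ) (K : Set X) (hK : IsEtale Γ K) :
    ∃ ΓK : Subgroup ((K : Set X) ≃ₜ (K : Set X)),
      ({f : (K : Set X) ≃ₜ (K : Set X) | ∃ γ : X ≃ₜ X, γ ∈ Γ ∧ γ * γ = 1 ∧
          ∀ x : K, f x = inducedMap γ K x} ⊆ (ΓK : Set ((K : Set X) ≃ₜ (K : Set X)))) ∧
      IsFullGroup ΓK ∧
      (∀ H : Subgroup ((K : Set X) ≃ₜ (K : Set X)),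
        {f : (K : Set X) ≃ₜ (K : Set X) | ∃ γ : X ≃ₜ X, γ ∈ Γ ∧ γ * γ = 1 ∧
          ∀ x : K, f x = inducedMap γ K x} ⊆ (H : Set ((K : Set X) ≃ₜ (K : Set X))) →
        IsFullGroup H → ΓK ≤ H) ∧
      (ΓK : Set ((K : Set X) ≃ₜ (K : Set X))) = restrGroup Γ K ∧
      IsAmpleGroup ΓK :=
  restrGroup_eq_smallest_full_general hX Γ hample K hK
end
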